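/- arXiv:1603.00082 — 12 statements merged into one kernel-verified Lean document; each statement's English description precedes it below -/
import Mathlib

section
/- The class of finite partial orders equipped with an upward closed subset has the amalgamation property: for all finite partial orders A, B, C equipped with upward closed subsets F_A ⊆ A, F_B ⊆ B, F_C ⊆ C, and all filtered order embeddings u : A → B and v : A → C, there exist a finite partial order D with an upward closed subset F_D ⊆ D and filtered order embeddings u' : B → D and v' : C → D such that u' ∘ u = v' ∘ v. -/
/-- The class of finite partial orders equipped with an upward closed
subset has the amalgamation property (with filtered order embeddings). -/
theorem finite_filtered_posets_amalgamation
    (A B C : Type) [PartialOrder A] [PartialOrder B] [PartialOrder C]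
    [Finite A] [Finite B] [Finite C]
    (FA : Set A) (FB : Set B) (FC : Set C)
    (hFA : ∀ x ∈ FA, ∀ y : A, x ≤ y → y ∈ FA)
    (hFB : ∀ x ∈ FB, ∀ y : B, x ≤ y → y ∈ FB)
    (hFC : ∀ x ∈ FC, ∀ y : C, x ≤ y → y ∈ FC)
    (u : A → B) (v : A → C)
    (hu_inj : Function.Injective u) (hu : ∀ x y : A, u x ≤ u y ↔ x ≤ y)
    (huF : ∀ x : A, x ∈ FA ↔ u x ∈ FB)
    (hv_inj : Function.Injective v) (hv : ∀ x y : A, v x ≤ v y ↔ x ≤ y)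
    (hvF : ∀ x : A, x ∈ FA ↔ v x ∈ FC) :
    ∃ (D : Type) (leD : D → D → Prop) (FD : Set D),
      IsPartialOrder D leD ∧ Finite D ∧
      (∀ x ∈ FD, ∀ y : D, leD x y → y ∈ FD) ∧
      ∃ (u' : B → D) (v' : C → D),
        Function.Injective u' ∧ (∀ x y : B, leD (u' x) (u' y) ↔ x ≤ y) ∧
        (∀ x : B, x ∈ FB ↔ u' x ∈ FD) ∧
        Function.Injective v' ∧ (∀ x y : C, leD (v' x) (v' y) ↔ x ≤ y) ∧
        (∀ x : C, x ∈ FC ↔ v' x ∈ FD) ∧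
        u' ∘ u = v' ∘ v := by
  classical
  set D := B ⊕ {c : C // c ∉ Set.range v} with hD
  set leD : D → D → Prop := fun x y =>
    match x, y with
    | .inl b, .inl b' => b ≤ b'
    | .inl b, .inr c => ∃ a, b ≤ u a ∧ v a ≤ c.1
    | .inr c, .inl b => ∃ a, c.1 ≤ v a ∧ u a ≤ b
    | .inr c, .inr c' => c.1 ≤ c'.1
    with hleD
  set FD : Set D := fun x =>
    match x with
    | .inl b => b ∈ FB
    | .inr c => c.1 ∈ FC
    with hFD
  refine ⟨D, leD, FD, ?_, ?_, ?_, ?_⟩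
  · refine { toIsPreorder := { toRefl := ⟨?_⟩, toIsTrans := ⟨?_⟩ }, toAntisymm := ⟨?_⟩ }
    ·
      rintro (b | c)
      · exact le_refl b
      · exact le_refl c.1
    ·
      rintro (b | c) (b' | c') (b'' | c'') h1 h2
      · exact le_trans h1 h2
      · obtain ⟨a, h3, h4⟩ := h2
        exact ⟨a, le_trans h1 h3, h4⟩
      · obtain ⟨a, h3, h4⟩ := h1
        obtain ⟨a', h5, h6⟩ := h2
        exact le_trans h3 (le_trans ((hu a a').2 ((hv a a').1 (le_trans h4 h5))) h6)
      · obtain ⟨a, h3, h4⟩ := h1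
        exact ⟨a, h3, le_trans h4 h2⟩
      · obtain ⟨a, h3, h4⟩ := h1
        exact ⟨a, h3, le_trans h4 h2⟩
      · obtain ⟨a, h3, h4⟩ := h1
        obtain ⟨a', h5, h6⟩ := h2
        exact le_trans h3 (le_trans ((hv a a').2 ((hu a a').1 (le_trans h4 h5))) h6)
      · obtain ⟨a, h3, h4⟩ := h2
        exact ⟨a, le_trans h1 h3, h4⟩
      · exact le_trans h1 h2
    ·
      rintro (b | c) (b' | c') h1 h2
      · exact congrArg Sum.inl (le_antisymm h1 h2)
      · obtain ⟨a, h3, h4⟩ := h1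
        obtain ⟨a', h5, h6⟩ := h2
        have haa : a ≤ a' := (hv a a').1 (le_trans h4 h5)
        have ha'a : a' ≤ a := (hu a' a).1 (le_trans h6 h3)
        have : a = a' := le_antisymm haa ha'a
        subst this
        exact absurd ⟨a, le_antisymm h4 h5⟩ c'.2
      · obtain ⟨a, h3, h4⟩ := h1
        obtain ⟨a', h5, h6⟩ := h2
        have haa : a ≤ a' := (hu a a').1 (le_trans h4 h5)
        have ha'a : a' ≤ a := (hv a' a).1 (le_trans h6 h3)
        have : a = a' := le_antisymm haa ha'a
        subst this
        exact absurd ⟨a, le_antisymm h6 h3⟩ c.2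
      · exact congrArg Sum.inr (Subtype.ext (le_antisymm h1 h2))
  · infer_instance
  · rintro (b | c) hx (b' | c') hle
    · exact hFB b hx b' hle
    · obtain ⟨a, h3, h4⟩ := hle
      have : u a ∈ FB := hFB b hx (u a) h3
      exact hFC (v a) ((hvF a).1 ((huF a).2 this)) c'.1 h4
    · obtain ⟨a, h3, h4⟩ := hle
      have : v a ∈ FC := hFC c.1 hx (v a) h3
      exact hFB (u a) ((huF a).1 ((hvF a).2 this)) b' h4
    · exact hFC c.1 hx c'.1 hle
  · refine ⟨Sum.inl, fun c => if h : c ∈ Set.range v then Sum.inl (u h.choose)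
      else Sum.inr ⟨c, h⟩, ?_, ?_, ?_, ?_, ?_, ?_, ?_⟩
    · exact fun x y h => Sum.inl.inj h
    · intro x y; rfl
    · intro x; rfl
    · intro c c' h
      by_cases hc : c ∈ Set.range v <;> by_cases hc' : c' ∈ Set.range v <;>
        simp only [hc, hc', dif_pos, dif_neg, not_false_iff] at h
      · have := hu_inj (Sum.inl.inj h)
        rw [← hc.choose_spec, ← hc'.choose_spec, this]
      · exact absurd h (by simp)
      · exact absurd h (by simp)
      · exact congrArg Subtype.val (Sum.inr.inj h)
    · intro c c'
      by_cases hc : c ∈ Set.range v <;> by_cases hc' : c' ∈ Set.range v <;>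
        simp only [hc, hc', dif_pos, dif_neg, not_false_iff]
      · have e : v hc.choose = c := hc.choose_spec
        have e' : v hc'.choose = c' := hc'.choose_spec
        show u hc.choose ≤ u hc'.choose ↔ _
        rw [hu, ← hv, e, e']
      · have e : v hc.choose = c := hc.choose_spec
        show (∃ a, u hc.choose ≤ u a ∧ v a ≤ c') ↔ _
        constructor
        · rintro ⟨a, h1, h2⟩
          calc c = v hc.choose := e.symm
            _ ≤ v a := (hv _ _).2 ((hu _ _).1 h1)
            _ ≤ c' := h2
        · intro h
          exact ⟨hc.choose, le_refl _, by rw [e]; exact h⟩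
      · have e' : v hc'.choose = c' := hc'.choose_spec
        show (∃ a, c ≤ v a ∧ u a ≤ u hc'.choose) ↔ _
        constructor
        · rintro ⟨a, h1, h2⟩
          calc c ≤ v a := h1
            _ ≤ v hc'.choose := (hv _ _).2 ((hu _ _).1 h2)
            _ = c' := e'
        · intro h
          exact ⟨hc'.choose, by rw [e']; exact h, le_refl _⟩
      · exact Iff.rfl
    · intro c
      by_cases hc : c ∈ Set.range v <;> simp only [hc, dif_pos, dif_neg, not_false_iff]
      · have e : v hc.choose = c := hc.choose_spec
        show _ ↔ u hc.choose ∈ FB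
        rw [← huF, hvF, e]
      · exact Iff.rfl
    · funext a
      have hr : v a ∈ Set.range v := ⟨a, rfl⟩
      simp only [Function.comp_apply, hr, dif_pos]
      exact congrArg (Sum.inl ∘ u) (hv_inj hr.choose_spec).symm
end

section
/- There exists a countably infinite partial order (P, ≤) with the extension property. -/
/-- The set `A ∪ {⋆}` where `⋆` is modeled as `none` and elements of `A` as `some a`. -/
def starSet {P : Type*} (A : Finset P) : Set (Option P) :=
  insert none (Option.some '' (A : Set P))

/-- A partial order has the extension property if every partial order on `A ∪ {⋆}`
(for `A ⊆ P` finite, `⋆ ∉ A`) whose restriction to `A` coincides with `≤` is realized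
by some point `p ∈ P \ A`. -/
def ExtensionProperty (P : Type*) [PartialOrder P] : Prop :=
  ∀ (A : Finset P) (R : Option P → Option P → Prop),
    (∀ x ∈ starSet A, R x x) →
    (∀ x ∈ starSet A, ∀ y ∈ starSet A, R x y → R y x → x = y) →
    (∀ x ∈ starSet A, ∀ y ∈ starSet A, ∀ z ∈ starSet A, R x y → R y z → R x z) →
    (∀ a ∈ A, ∀ b ∈ A, (R (some a) (some b) ↔ a ≤ b)) →
    ∃ p : P, p ∉ A ∧ ∀ a ∈ A, (a ≤ p ↔ R (some a) none) ∧ (p ≤ a ↔ R none (some a))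

open Finset

namespace RandomPoset

open scoped Classical


noncomputable def rawT (n : ℕ) : Finset ℕ × Finset ℕ :=
  ((Encodable.decode (α := Finset ℕ × Finset ℕ) (Nat.unpair n).2).getD (∅, ∅))

noncomputable def DrS (n : ℕ) : Finset ℕ := (rawT n).1.filter (· < n)
noncomputable def UrS (n : ℕ) : Finset ℕ := (rawT n).2.filter (· < n)

/-- one step of the recursion -/
noncomputable def stuffAux (n : ℕ) (prev : ∀ m, m < n → Finset ℕ × Finset ℕ) :
    Finset ℕ × Finset ℕ :=
  let r : ℕ → ℕ → Prop := fun a b =>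
    a = b ∨ (∃ h : a < b ∧ b < n, a ∈ (prev b h.2).1)
      ∨ (∃ h : b < a ∧ a < n, b ∈ (prev a h.2).2)
  if (∀ a ∈ DrS n, ∀ b ∈ UrS n, r a b ∧ ¬ r b a) then
    ((range n).filter (fun x => ∃ a ∈ DrS n, r x a),
     (range n).filter (fun x => ∃ b ∈ UrS n, r b x))
  else (∅, ∅)

noncomputable def stuff : ℕ → Finset ℕ × Finset ℕ :=
  WellFounded.fix Nat.lt_wfRel.wf stuffAux

lemma stuff_def (n : ℕ) : stuff n = stuffAux n (fun m _ => stuff m) :=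
  WellFounded.fix_eq _ _ _

def rel (a b : ℕ) : Prop :=
  a = b ∨ (a < b ∧ a ∈ (stuff b).1) ∨ (b < a ∧ b ∈ (stuff a).2)

def validC (n : ℕ) : Prop := ∀ a ∈ DrS n, ∀ b ∈ UrS n, rel a b ∧ ¬ rel b a

lemma rbody_iff {n a b : ℕ} (ha : a < n) (hb : b < n) :
    (a = b ∨ (∃ h : a < b ∧ b < n, a ∈ (stuff b).1)
      ∨ (∃ h : b < a ∧ a < n, b ∈ (stuff a).2)) ↔ rel a b := by
  unfold rel
  constructor
  · rintro (h | ⟨h, hm⟩ | ⟨h, hm⟩)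
    · exact Or.inl h
    · exact Or.inr (Or.inl ⟨h.1, hm⟩)
    · exact Or.inr (Or.inr ⟨h.1, hm⟩)
  · rintro (h | ⟨h, hm⟩ | ⟨h, hm⟩)
    · exact Or.inl h
    · exact Or.inr (Or.inl ⟨⟨h, hb⟩, hm⟩)
    · exact Or.inr (Or.inr ⟨⟨h, ha⟩, hm⟩)

lemma mem_DrS_lt {n a : ℕ} (h : a ∈ DrS n) : a < n := (mem_filter.1 h).2
lemma mem_UrS_lt {n a : ℕ} (h : a ∈ UrS n) : a < n := (mem_filter.1 h).2

lemma stuff_eq (n : ℕ) :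
    stuff n = if validC n then
      ((range n).filter (fun x => ∃ a ∈ DrS n, rel x a),
       (range n).filter (fun x => ∃ b ∈ UrS n, rel b x))
    else (∅, ∅) := by
  rw [stuff_def, stuffAux]
  have hcond : (∀ a ∈ DrS n, ∀ b ∈ UrS n,
      (a = b ∨ (∃ h : a < b ∧ b < n, a ∈ (stuff b).1)
        ∨ (∃ h : b < a ∧ a < n, b ∈ (stuff a).2)) ∧
      ¬ (b = a ∨ (∃ h : b < a ∧ a < n, b ∈ (stuff a).1)
        ∨ (∃ h : a < b ∧ b < n, a ∈ (stuff b).2))) ↔ validC n := by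
    unfold validC
    refine forall₂_congr fun a haD => forall₂_congr fun b hbU => ?_
    exact and_congr (rbody_iff (mem_DrS_lt haD) (mem_UrS_lt hbU))
      (not_congr (rbody_iff (mem_UrS_lt hbU) (mem_DrS_lt haD)))
  have h1 : (range n).filter (fun x => ∃ a ∈ DrS n,
      (x = a ∨ (∃ h : x < a ∧ a < n, x ∈ (stuff a).1)
        ∨ (∃ h : a < x ∧ x < n, a ∈ (stuff x).2)))
      = (range n).filter (fun x => ∃ a ∈ DrS n, rel x a) := by
    refine filter_congr fun x hx => ?_
    exact exists_congr fun a => and_congr_right fun haD =>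
      rbody_iff (mem_range.1 hx) (mem_DrS_lt haD)
  have h2 : (range n).filter (fun x => ∃ b ∈ UrS n,
      (b = x ∨ (∃ h : b < x ∧ x < n, b ∈ (stuff x).1)
        ∨ (∃ h : x < b ∧ b < n, x ∈ (stuff b).2)))
      = (range n).filter (fun x => ∃ b ∈ UrS n, rel b x) := by
    refine filter_congr fun x hx => ?_
    exact exists_congr fun b => and_congr_right fun hbU =>
      rbody_iff (mem_UrS_lt hbU) (mem_range.1 hx)
  exact if_congr hcond (by rw [h1, h2]) rfl


lemma mem_fst {n x : ℕ} :
    x ∈ (stuff n).1 ↔ validC n ∧ x < n ∧ ∃ a ∈ DrS n, rel x a := by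
  rw [stuff_eq]
  split_ifs with h
  · simp only [mem_filter, mem_range]; tauto
  · simp [h]

lemma mem_snd {n x : ℕ} :
    x ∈ (stuff n).2 ↔ validC n ∧ x < n ∧ ∃ b ∈ UrS n, rel b x := by
  rw [stuff_eq]
  split_ifs with h
  · simp only [mem_filter, mem_range]; tauto
  · simp [h]

lemma rel_refl (a : ℕ) : rel a a := Or.inl rfl

lemma rel_lt_iff {a n : ℕ} (h : a < n) : rel a n ↔ a ∈ (stuff n).1 := by
  unfold rel
  constructor
  · rintro (rfl | ⟨_, hm⟩ | ⟨h', _⟩)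
    · omega
    · exact hm
    · omega
  · intro hm; exact Or.inr (Or.inl ⟨h, hm⟩)

lemma rel_gt_iff {a n : ℕ} (h : a < n) : rel n a ↔ a ∈ (stuff n).2 := by
  unfold rel
  constructor
  · rintro (rfl | ⟨h', _⟩ | ⟨_, hm⟩)
    · omega
    · omega
    · exact hm
  · intro hm; exact Or.inr (Or.inr ⟨h, hm⟩)

lemma rel_trans_aux : ∀ N a b c, a ≤ N → b ≤ N → c ≤ N → rel a b → rel b c → rel a c := by
  intro N
  induction N using Nat.strong_induction_on with
  | _ N IH =>
  intro a b c ha hb hc hab hbc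
  -- transitivity for strictly smaller triples
  have key : ∀ x y z, x < N → y < N → z < N → rel x y → rel y z → rel x z := by
    intro x y z hx hy hz
    exact IH (max x (max y z)) (by omega) x y z (by omega) (by omega) (by omega)
  -- D n is downward closed (n ≤ N)
  have H1 : ∀ n x y, n ≤ N → x < n → rel x y → y ∈ (stuff n).1 → x ∈ (stuff n).1 := by
    intro n x y hn hx hxy hy
    obtain ⟨hv, hyn, a', ha'D, hya'⟩ := mem_fst.1 hy
    exact mem_fst.2 ⟨hv, hx, a', ha'D,
      key x y a' (by omega) (by omega) (by have := mem_DrS_lt ha'D; omega) hxy hya'⟩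
  -- U n is upward closed
  have H2 : ∀ n x y, n ≤ N → y < n → x ∈ (stuff n).2 → rel x y → y ∈ (stuff n).2 := by
    intro n x y hn hy hx hxy
    obtain ⟨hv, hxn, b', hb'U, hb'x⟩ := mem_snd.1 hx
    exact mem_snd.2 ⟨hv, hy, b', hb'U,
      key b' x y (by have := mem_UrS_lt hb'U; omega) (by omega) (by omega) hb'x hxy⟩
  -- D n below U n
  have H3 : ∀ n x y, n ≤ N → x ∈ (stuff n).1 → y ∈ (stuff n).2 → rel x y := by
    intro n x y hn hx hy
    obtain ⟨hv, hxn, a', ha'D, hxa'⟩ := mem_fst.1 hx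
    obtain ⟨-, hyn, b', hb'U, hb'y⟩ := mem_snd.1 hy
    have h1 : rel a' b' := (hv a' ha'D b' hb'U).1
    have ha' := mem_DrS_lt ha'D
    have hb' := mem_UrS_lt hb'U
    have h2 : rel x b' := key x a' b' (by omega) (by omega) (by omega) hxa' h1
    exact key x b' y (by omega) (by omega) (by omega) h2 hb'y
  rcases hab with rfl | ⟨hlt1, hD1⟩ | ⟨hlt1, hU1⟩
  · exact hbc
  · -- a < b, a ∈ D b
    rcases hbc with rfl | ⟨hlt2, hD2⟩ | ⟨hlt2, hU2⟩
    · exact Or.inr (Or.inl ⟨hlt1, hD1⟩)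
    · -- b < c, b ∈ D c : a ∈ D c by downward closure
      exact (rel_lt_iff (by omega)).2
        (H1 c a b hc (by omega) (Or.inr (Or.inl ⟨hlt1, hD1⟩)) hD2)
    · -- c < b, c ∈ U b : D b ≤ U b
      exact H3 b a c hb hD1 hU2
  · -- b < a, b ∈ U a
    rcases hbc with rfl | ⟨hlt2, hD2⟩ | ⟨hlt2, hU2⟩
    · exact Or.inr (Or.inr ⟨hlt1, hU1⟩)
    · -- b < c, b ∈ D c
      rcases lt_trichotomy a c with h | rfl | h
      · exact (rel_lt_iff h).2 (H1 c a b hc h (Or.inr (Or.inr ⟨hlt1, hU1⟩)) hD2)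
      · exact rel_refl a
      · exact (rel_gt_iff h).2 (H2 a b c ha h hU1 (Or.inr (Or.inl ⟨hlt2, hD2⟩)))
    · -- c < b, c ∈ U b : c ∈ U a by upward closure
      exact (rel_gt_iff (by omega)).2
        (H2 a b c ha (by omega) hU1 (Or.inr (Or.inr ⟨hlt2, hU2⟩)))

lemma rel_trans {a b c : ℕ} (hab : rel a b) (hbc : rel b c) : rel a c :=
  rel_trans_aux (max a (max b c)) a b c (by omega) (by omega) (by omega) hab hbc

lemma rel_antisymm {a b : ℕ} (hab : rel a b) (hba : rel b a) : a = b := by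
  by_contra hne
  rcases lt_trichotomy a b with h | h | h
  · have h1 : a ∈ (stuff b).1 := (rel_lt_iff h).1 hab
    have h2 : a ∈ (stuff b).2 := (rel_gt_iff h).1 hba
    obtain ⟨hv, -, a', ha'D, haa'⟩ := mem_fst.1 h1
    obtain ⟨-, -, b', hb'U, hb'a⟩ := mem_snd.1 h2
    exact (hv a' ha'D b' hb'U).2 (rel_trans hb'a haa')
  · exact hne h
  · have h1 : b ∈ (stuff a).1 := (rel_lt_iff h).1 hba
    have h2 : b ∈ (stuff a).2 := (rel_gt_iff h).1 hab
    obtain ⟨hv, -, a', ha'D, haa'⟩ := mem_fst.1 h1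
    obtain ⟨-, -, b', hb'U, hb'a⟩ := mem_snd.1 h2
    exact (hv a' ha'D b' hb'U).2 (rel_trans hb'a haa')

noncomputable def relPO : PartialOrder ℕ where
  le := rel
  lt := fun a b => rel a b ∧ ¬ rel b a
  lt_iff_le_not_ge := fun _ _ => Iff.rfl
  le_refl := rel_refl
  le_trans := fun _ _ _ => rel_trans
  le_antisymm := fun _ _ => rel_antisymm


lemma starSet_none {A : Finset ℕ} : (none : Option ℕ) ∈ starSet A :=
  Set.mem_insert _ _

lemma starSet_some {A : Finset ℕ} {a : ℕ} (ha : a ∈ A) : (some a : Option ℕ) ∈ starSet A :=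
  Set.mem_insert_iff.2 (Or.inr ⟨a, ha, rfl⟩)

theorem extension : @ExtensionProperty ℕ relPO := by
  intro A R hrefl hanti htrans hres
  -- the prescribed lower and upper sets
  set D0 : Finset ℕ := A.filter (fun a => R (some a) none) with hD0
  set U0 : Finset ℕ := A.filter (fun a => R none (some a)) with hU0
  set t : ℕ := Encodable.encode ((D0, U0) : Finset ℕ × Finset ℕ) with ht
  set m : ℕ := A.sup id with hm
  set n : ℕ := Nat.pair (m + 1) t with hn
  have hmn : m < n := lt_of_lt_of_le (Nat.lt_succ_self m) (Nat.left_le_pair _ _)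
  have hAn : ∀ a ∈ A, a < n := fun a ha =>
    lt_of_le_of_lt (Finset.le_sup (f := id) ha) hmn
  have hraw : rawT n = (D0, U0) := by
    rw [rawT, hn, Nat.unpair_pair]
    simp [ht, Encodable.encodek]
  have hDr : DrS n = D0 := by
    rw [DrS, hraw]
    exact filter_true_of_mem fun a ha => hAn a (mem_filter.1 ha).1
  have hUr : UrS n = U0 := by
    rw [UrS, hraw]
    exact filter_true_of_mem fun a ha => hAn a (mem_filter.1 ha).1
  -- R translated to rel on A
  have hRrel : ∀ a ∈ A, ∀ b ∈ A, (rel a b ↔ R (some a) (some b)) :=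
    fun a ha b hb => (hres a ha b hb).symm
  have hval : validC n := by
    intro a haD b hbU
    rw [hDr] at haD
    rw [hUr] at hbU
    obtain ⟨haA, haR⟩ := mem_filter.1 haD
    obtain ⟨hbA, hbR⟩ := mem_filter.1 hbU
    have h1 : R (some a) (some b) :=
      htrans _ (starSet_some haA) _ starSet_none _ (starSet_some hbA) haR hbR
    refine ⟨(hRrel a haA b hbA).2 h1, fun hba => ?_⟩
    have h2 : R (some b) (some a) := (hRrel b hbA a haA).1 hba
    have h3 : R none (some a) :=
      htrans _ starSet_none _ (starSet_some hbA) _ (starSet_some haA) hbR h2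
    exact Option.some_ne_none a
      (hanti _ starSet_none _ (starSet_some haA) h3 haR).symm
  refine ⟨n, fun hmem => absurd (hAn n hmem) (lt_irrefl n), fun a ha => ?_⟩
  have haln := hAn a ha
  constructor
  · show rel a n ↔ _
    rw [rel_lt_iff haln, mem_fst]
    constructor
    · rintro ⟨-, -, a', ha'D, haa'⟩
      rw [hDr] at ha'D
      obtain ⟨ha'A, ha'R⟩ := mem_filter.1 ha'D
      have h1 : R (some a) (some a') := (hRrel a ha a' ha'A).1 haa'
      exact htrans _ (starSet_some ha) _ (starSet_some ha'A) _ starSet_none h1 ha'R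
    · intro h
      refine ⟨hval, haln, a, ?_, rel_refl a⟩
      rw [hDr]
      exact mem_filter.2 ⟨ha, h⟩
  · show rel n a ↔ _
    rw [rel_gt_iff haln, mem_snd]
    constructor
    · rintro ⟨-, -, b', hb'U, hb'a⟩
      rw [hUr] at hb'U
      obtain ⟨hb'A, hb'R⟩ := mem_filter.1 hb'U
      have h1 : R (some b') (some a) := (hRrel b' hb'A a ha).1 hb'a
      exact htrans _ starSet_none _ (starSet_some hb'A) _ (starSet_some ha) hb'R h1
    · intro h
      refine ⟨hval, haln, a, ?_, rel_refl a⟩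
      rw [hUr]
      exact mem_filter.2 ⟨ha, h⟩

end RandomPoset

/-- There exists a countably infinite partial order with the
extension property (the random partial order). -/
theorem exists_random_partial_order :
    ∃ (P : Type) (inst : PartialOrder P),
      Countable P ∧ Infinite P ∧ @ExtensionProperty P inst :=
  ⟨ℕ, RandomPoset.relPO, inferInstance, inferInstance, RandomPoset.extension⟩
end

section
/- Any two countably infinite partial orders with the extension property are order isomorphic. -/
section Aux

variable {P Q : Type*} [PartialOrder P] [PartialOrder Q]

open scoped Classical

set_option linter.unusedSectionVars false

/-- A finite set of pairs is a partial isomorphism. -/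
def IsPIso (f : Finset (P × Q)) : Prop :=
  ∀ x ∈ f, ∀ y ∈ f, (x.1 ≤ y.1 ↔ x.2 ≤ y.2)

lemma IsPIso.left_unique {f : Finset (P × Q)} (hf : IsPIso f)
    {p p' : P} {q : Q} (h : (p, q) ∈ f) (h' : (p', q) ∈ f) : p = p' :=
  le_antisymm ((hf _ h _ h').mpr le_rfl) ((hf _ h' _ h).mpr le_rfl)

lemma IsPIso.right_unique {f : Finset (P × Q)} (hf : IsPIso f)
    {p : P} {q q' : Q} (h : (p, q) ∈ f) (h' : (p, q') ∈ f) : q = q' :=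
  le_antisymm ((hf _ h _ h').mp le_rfl) ((hf _ h' _ h).mp le_rfl)

lemma IsPIso.swap {f : Finset (P × Q)} (hf : IsPIso f) :
    IsPIso (f.image Prod.swap) := by
  intro x hx y hy
  obtain ⟨a, ha, rfl⟩ := Finset.mem_image.mp hx
  obtain ⟨b, hb, rfl⟩ := Finset.mem_image.mp hy
  exact (hf a ha b hb).symm

lemma mem_starSet_some {A : Finset Q} {b : Q} :
    (some b : Option Q) ∈ starSet A ↔ b ∈ A := by
  simp [starSet]

lemma mem_starSet_none {A : Finset Q} : (none : Option Q) ∈ starSet A := by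
  simp [starSet]

lemma starSet_cases {A : Finset Q} {x : Option Q} (hx : x ∈ starSet A) :
    x = none ∨ ∃ b ∈ A, x = some b := by
  rcases hx with h | ⟨b, hb, rfl⟩
  · exact Or.inl h
  · exact Or.inr ⟨b, hb, rfl⟩

/-- Extension of a partial isomorphism so that a new left point is in the domain. -/
lemma extend_left (hQ : ExtensionProperty Q) {f : Finset (P × Q)} (hf : IsPIso f)
    (p₀ : P) : ∃ g, f ⊆ g ∧ IsPIso g ∧ ∃ q, (p₀, q) ∈ g := by
  by_cases hp : ∃ q, (p₀, q) ∈ f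
  · exact ⟨f, subset_rfl, hf, hp⟩
  push_neg at hp
  set B : Finset Q := f.image Prod.snd with hBdef
  have memB : ∀ {b : Q}, b ∈ B → ∃ p, (p, b) ∈ f := by
    intro b hb
    obtain ⟨x, hx, hx2⟩ := Finset.mem_image.mp hb
    exact ⟨x.1, by simpa [← hx2] using hx⟩
  set R : Option Q → Option Q → Prop := fun x y =>
    match x, y with
    | some b, some b' => b ≤ b'
    | some b, none => ∃ p, (p, b) ∈ f ∧ p ≤ p₀
    | none, some b => ∃ p, (p, b) ∈ f ∧ p₀ ≤ p
    | none, none => True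
    with hRdef
  have hrefl : ∀ x ∈ starSet B, R x x := by
    intro x hx
    rcases starSet_cases hx with rfl | ⟨b, hb, rfl⟩
    · trivial
    · exact le_rfl
  have hanti : ∀ x ∈ starSet B, ∀ y ∈ starSet B, R x y → R y x → x = y := by
    intro x hx y hy hxy hyx
    rcases starSet_cases hx with rfl | ⟨b, hb, rfl⟩ <;>
      rcases starSet_cases hy with rfl | ⟨b', hb', rfl⟩
    · rfl
    · obtain ⟨p, hpf, hple⟩ := hxy
      obtain ⟨p', hpf', hple'⟩ := hyx
      have : p = p' := hf.left_unique hpf hpf'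
      subst this
      exact absurd (hpf) (by rw [le_antisymm hple' hple]; exact hp b')
    · obtain ⟨p, hpf, hple⟩ := hxy
      obtain ⟨p', hpf', hple'⟩ := hyx
      have : p = p' := hf.left_unique hpf hpf'
      subst this
      exact absurd (hpf) (by rw [le_antisymm hple hple']; exact hp b)
    · exact congrArg some (le_antisymm hxy hyx)
  have htrans : ∀ x ∈ starSet B, ∀ y ∈ starSet B, ∀ z ∈ starSet B,
      R x y → R y z → R x z := by
    intro x hx y hy z hz hxy hyz
    rcases starSet_cases hx with rfl | ⟨a, ha, rfl⟩ <;>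
      rcases starSet_cases hy with rfl | ⟨b, hb, rfl⟩ <;>
        rcases starSet_cases hz with rfl | ⟨c, hc, rfl⟩
    · trivial
    · exact hyz
    · trivial
    · -- none, some b, some c : p₀ ≤ (p for b), b ≤ c ⇒ p₀ ≤ (p for c)
      obtain ⟨p, hpf, hple⟩ := hxy
      obtain ⟨p', hpf'⟩ := memB hc
      exact ⟨p', hpf', hple.trans ((hf _ hpf _ hpf').mpr hyz)⟩
    · trivial
    · -- some a, none, some c : (p for a) ≤ p₀, p₀ ≤ (p for c) ⇒ a ≤ c
      obtain ⟨p, hpf, hple⟩ := hxy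
      obtain ⟨p', hpf', hple'⟩ := hyz
      exact (hf _ hpf _ hpf').mp (hple.trans hple')
    · -- some a, some b, none : a ≤ b, (p for b) ≤ p₀ ⇒ (p for a) ≤ p₀
      obtain ⟨p', hpf', hple'⟩ := hyz
      obtain ⟨p, hpf⟩ := memB ha
      exact ⟨p, hpf, ((hf _ hpf _ hpf').mpr hxy).trans hple'⟩
    · exact hxy.trans hyz
  have hrestr : ∀ a ∈ B, ∀ b ∈ B, (R (some a) (some b) ↔ a ≤ b) := fun _ _ _ _ => Iff.rfl
  obtain ⟨q, hqB, hq⟩ := hQ B R hrefl hanti htrans hrestr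
  refine ⟨insert (p₀, q) f, Finset.subset_insert _ _, ?_, q, Finset.mem_insert_self _ _⟩
  have hBmem : ∀ {x : P × Q}, x ∈ f → x.2 ∈ B := by
    intro x hx; exact Finset.mem_image.mpr ⟨x, hx, rfl⟩
  intro x hx y hy
  rcases Finset.mem_insert.mp hx with rfl | hx <;>
    rcases Finset.mem_insert.mp hy with rfl | hy
  · simp
  · -- x = (p₀, q), y ∈ f
    rw [(hq y.2 (hBmem hy)).2]
    constructor
    · intro h; exact ⟨y.1, by simpa using hy, h⟩
    · rintro ⟨p, hpf, hle⟩
      rwa [hf.left_unique hpf (by simpa using hy)] at hle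
  · -- x ∈ f, y = (p₀, q)
    rw [(hq x.2 (hBmem hx)).1]
    constructor
    · intro h; exact ⟨x.1, by simpa using hx, h⟩
    · rintro ⟨p, hpf, hle⟩
      rwa [hf.left_unique hpf (by simpa using hx)] at hle
  · exact hf x hx y hy

lemma extend_right (hP : ExtensionProperty P) {f : Finset (P × Q)} (hf : IsPIso f)
    (q₀ : Q) : ∃ g, f ⊆ g ∧ IsPIso g ∧ ∃ p, (p, q₀) ∈ g := by
  obtain ⟨g', hsub, hiso, p, hpg⟩ := extend_left hP hf.swap q₀
  refine ⟨g'.image Prod.swap, ?_, hiso.swap, p, ?_⟩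
  · intro x hx
    exact Finset.mem_image.mpr ⟨x.swap, hsub (Finset.mem_image.mpr ⟨x, hx, rfl⟩), rfl⟩
  · exact Finset.mem_image.mpr ⟨(q₀, p), hpg, rfl⟩

lemma extend_both (hP : ExtensionProperty P) (hQ : ExtensionProperty Q)
    {f : Finset (P × Q)} (hf : IsPIso f) (x : P ⊕ Q) :
    ∃ g, f ⊆ g ∧ IsPIso g ∧
      (∀ p, x = .inl p → ∃ q, (p, q) ∈ g) ∧ (∀ q, x = .inr q → ∃ p, (p, q) ∈ g) := by
  rcases x with p | q
  · obtain ⟨g, h1, h2, h3⟩ := extend_left hQ hf p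
    refine ⟨g, h1, h2, ?_, ?_⟩
    · rintro p' hp'; cases hp'; exact h3
    · rintro q hq; cases hq
  · obtain ⟨g, h1, h2, h3⟩ := extend_right hP hf q
    refine ⟨g, h1, h2, ?_, ?_⟩
    · rintro p hp; cases hp
    · rintro q' hq'; cases hq'; exact h3

/-- The increasing chain of partial isomorphisms. -/
noncomputable def seqChain (hP : ExtensionProperty P) (hQ : ExtensionProperty Q)
    (e : ℕ → P ⊕ Q) : ℕ → {f : Finset (P × Q) // IsPIso f}
  | 0 => ⟨∅, fun x hx => absurd hx (Finset.notMem_empty x)⟩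
  | (n + 1) =>
    ⟨(extend_both hP hQ (seqChain hP hQ e n).2 (e n)).choose,
      (extend_both hP hQ (seqChain hP hQ e n).2 (e n)).choose_spec.2.1⟩

lemma seqChain_mono (hP : ExtensionProperty P) (hQ : ExtensionProperty Q)
    (e : ℕ → P ⊕ Q) {m n : ℕ} (h : m ≤ n) :
    (seqChain hP hQ e m).1 ⊆ (seqChain hP hQ e n).1 := by
  induction n with
  | zero => cases Nat.le_zero.mp h; exact subset_rfl
  | succ n ih =>
    rcases Nat.le_succ_iff.mp h with h' | rfl
    · exact (ih h').trans
        (extend_both hP hQ (seqChain hP hQ e n).2 (e n)).choose_spec.1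
    · exact subset_rfl

lemma seqChain_left (hP : ExtensionProperty P) (hQ : ExtensionProperty Q)
    (e : ℕ → P ⊕ Q) {n : ℕ} {p : P} (h : e n = .inl p) :
    ∃ q, (p, q) ∈ (seqChain hP hQ e (n + 1)).1 :=
  (extend_both hP hQ (seqChain hP hQ e n).2 (e n)).choose_spec.2.2.1 p h

lemma seqChain_right (hP : ExtensionProperty P) (hQ : ExtensionProperty Q)
    (e : ℕ → P ⊕ Q) {n : ℕ} {q : Q} (h : e n = .inr q) :
    ∃ p, (p, q) ∈ (seqChain hP hQ e (n + 1)).1 :=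
  (extend_both hP hQ (seqChain hP hQ e n).2 (e n)).choose_spec.2.2.2 q h

end Aux

/-- Any two countably infinite partial orders with the extension
property are order isomorphic. -/
theorem random_partial_order_unique
    (P Q : Type*) [PartialOrder P] [PartialOrder Q]
    [Countable P] [Infinite P] [Countable Q] [Infinite Q]
    (hP : ExtensionProperty P) (hQ : ExtensionProperty Q) :
    Nonempty (P ≃o Q) := by
  classical
  obtain ⟨e, he⟩ := exists_surjective_nat (P ⊕ Q)
  set S : P → Q → Prop := fun p q => ∃ n, (p, q) ∈ (seqChain hP hQ e n).1 with hSdef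
  have hiso : ∀ {p p' q q'}, S p q → S p' q' → (p ≤ p' ↔ q ≤ q') := by
    rintro p p' q q' ⟨m, hm⟩ ⟨n, hn⟩
    have h1 := seqChain_mono hP hQ e (Nat.le_max_left m n) hm
    have h2 := seqChain_mono hP hQ e (Nat.le_max_right m n) hn
    exact (seqChain hP hQ e (max m n)).2 _ h1 _ h2
  have hfunL : ∀ {p q q'}, S p q → S p q' → q = q' :=
    fun h h' => le_antisymm ((hiso h h').mp le_rfl) ((hiso h' h).mp le_rfl)
  have hfunR : ∀ {p p' q}, S p q → S p' q → p = p' :=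
    fun h h' => le_antisymm ((hiso h h').mpr le_rfl) ((hiso h' h).mpr le_rfl)
  have htotL : ∀ p, ∃ q, S p q := by
    intro p
    obtain ⟨n, hn⟩ := he (.inl p)
    obtain ⟨q, hq⟩ := seqChain_left hP hQ e hn
    exact ⟨q, n + 1, hq⟩
  have htotR : ∀ q, ∃ p, S p q := by
    intro q
    obtain ⟨n, hn⟩ := he (.inr q)
    obtain ⟨p, hp⟩ := seqChain_right hP hQ e hn
    exact ⟨p, n + 1, hp⟩
  choose φ hφ using htotL
  choose ψ hψ using htotR
  refine ⟨⟨⟨φ, ψ, fun p => ?_, fun q => ?_⟩, ?_⟩⟩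
  · exact hfunR (hψ (φ p)) (hφ p)
  · exact hfunL (hφ (ψ q)) (hψ q)
  · intro a b
    exact (hiso (hφ a) (hφ b)).symm
end

section
/- Let (P, ≤) be a partial order and let F ⊆ P be upward closed. Define the rotated relation <_F on P by: x <_F y if and only if (x ∈ F and y ∈ F and x < y), or (x ∉ F and y ∉ F and x < y), or (x ∈ F and y ∉ F and x ⊥ y). Then <_F is a strict partial order, i.e., it is irreflexive and transitive. -/
/-- `x ⊥ y` : incomparability. -/
def Incomp {P : Type*} [PartialOrder P] (x y : P) : Prop := ¬ x ≤ y ∧ ¬ y ≤ x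

/-- The rotated relation `<_F` determined by an upward closed set `F`. -/
def rotLT {P : Type*} [PartialOrder P] (F : Set P) (x y : P) : Prop :=
  (x ∈ F ∧ y ∈ F ∧ x < y) ∨ (x ∉ F ∧ y ∉ F ∧ x < y) ∨ (x ∈ F ∧ y ∉ F ∧ Incomp x y)

/-- If `F` is upward closed then the rotated relation `<_F` is a
strict partial order: irreflexive and transitive. -/
theorem rotLT_irrefl_trans
    (P : Type*) [PartialOrder P] (F : Set P)
    (hF : ∀ x ∈ F, ∀ y : P, x ≤ y → y ∈ F) :
    (∀ x : P, ¬ rotLT F x x) ∧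
    (∀ x y z : P, rotLT F x y → rotLT F y z → rotLT F x z) := by
  constructor
  · rintro x (⟨-, -, h⟩ | ⟨-, -, h⟩ | ⟨-, -, h, -⟩)
    · exact lt_irrefl x h
    · exact lt_irrefl x h
    · exact h le_rfl
  · rintro x y z
      (⟨hx, hy, hxy⟩ | ⟨hx, hy, hxy⟩ | ⟨hx, hy, hxy⟩)
      (⟨hy', hz, hyz⟩ | ⟨hy', hz, hyz⟩ | ⟨hy', hz, hyz⟩)
    · exact Or.inl ⟨hx, hz, hxy.trans hyz⟩
    · exact absurd hy hy'
    · exact Or.inr (Or.inr ⟨hx, hz, fun h => hz (hF x hx z h), fun h => hyz.2 (h.trans hxy.le)⟩)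
    · exact absurd hy' hy
    · exact Or.inr (Or.inl ⟨hx, hz, hxy.trans hyz⟩)
    · exact absurd hy' hy
    · exact absurd hy' hy
    · exact Or.inr (Or.inr ⟨hx, hz, fun h => hz (hF x hx z h), fun h => hxy.2 (hyz.le.trans h)⟩)
    · exact absurd hy' hy
end

section
/- Let (P, ≤) be a countably infinite partial order with the extension property, and let s, t ∈ P with s < t. Then the open interval {x ∈ P : s < x ∧ x < t}, with the order induced from P, is order isomorphic to (P, ≤). -/
lemma mem_starSet {P : Type*} {A : Finset P} {x : Option P} :
    x ∈ starSet A ↔ x = none ∨ ∃ a ∈ A, x = some a := by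
  simp [starSet, eq_comm]

lemma none_mem_starSet {P : Type*} {A : Finset P} : (none : Option P) ∈ starSet A :=
  mem_starSet.mpr (Or.inl rfl)

lemma some_mem_starSet_iff {P : Type*} {A : Finset P} {a : P} :
    (some a : Option P) ∈ starSet A ↔ a ∈ A := by
  simp [mem_starSet]

lemma some_mem_starSet {P : Type*} {A : Finset P} {a : P} (ha : a ∈ A) :
    (some a) ∈ starSet A :=
  some_mem_starSet_iff.mpr ha

section BackForth

variable {P Q : Type*} [PartialOrder P] [PartialOrder Q]

/-- A list of pairs is a "good" partial isomorphism if corresponding comparisons agree. -/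
def GoodPI (h : List (P × Q)) : Prop :=
  ∀ x ∈ h, ∀ y ∈ h, (x.1 ≤ y.1 ↔ x.2 ≤ y.2)

lemma GoodPI.inj_right {h : List (P × Q)} (hh : GoodPI h) {x y : P × Q}
    (hx : x ∈ h) (hy : y ∈ h) (e : x.2 = y.2) : x.1 = y.1 :=
  le_antisymm ((hh x hx y hy).mpr (le_of_eq e)) ((hh y hy x hx).mpr (le_of_eq e.symm))

lemma GoodPI.swap {h : List (P × Q)} (hh : GoodPI h) : GoodPI (h.map Prod.swap) := by
  intro x hx y hy
  simp only [List.mem_map] at hx hy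
  obtain ⟨a, ha, rfl⟩ := hx
  obtain ⟨b, hb, rfl⟩ := hy
  exact (hh a ha b hb).symm

lemma extend_left_s6 (hQ : ExtensionProperty Q) (h : List (P × Q)) (hh : GoodPI h) (p : P) :
    ∃ q : Q, GoodPI ((p, q) :: h) := by
  classical
  by_cases hp : ∃ x ∈ h, x.1 = p
  · obtain ⟨x, hx, rfl⟩ := hp
    refine ⟨x.2, ?_⟩
    intro a ha b hb
    simp only [List.mem_cons] at ha hb
    rcases ha with rfl | ha <;> rcases hb with rfl | hb
    · exact iff_of_true le_rfl le_rfl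
    · exact hh x hx b hb
    · exact hh a ha x hx
    · exact hh a ha b hb
  · push_neg at hp
    set A : Finset Q := (h.map Prod.snd).toFinset with hA
    have hmemA : ∀ b : Q, b ∈ A ↔ ∃ x ∈ h, x.2 = b := by
      intro b; simp [hA]
    set R : Option Q → Option Q → Prop := fun x y =>
      match x, y with
      | some b, some b' => b ≤ b'
      | some b, none => ∃ x ∈ h, x.2 = b ∧ x.1 ≤ p
      | none, some b' => ∃ x ∈ h, x.2 = b' ∧ p ≤ x.1
      | none, none => True
      with hR
    have h1 : ∀ x ∈ starSet A, R x x := by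
      rintro (_ | b) _
      · trivial
      · exact le_refl b
    have h2 : ∀ x ∈ starSet A, ∀ y ∈ starSet A, R x y → R y x → x = y := by
      rintro (_ | b) _ (_ | b') _ hxy hyx
      · rfl
      · exfalso
        obtain ⟨x, hx', hxb, hpx⟩ := hxy
        obtain ⟨y, hy', hyb, hyp⟩ := hyx
        have e : x.1 = y.1 := hh.inj_right hx' hy' (hxb.trans hyb.symm)
        exact hp y hy' (le_antisymm hyp (e ▸ hpx))
      · exfalso
        obtain ⟨x, hx', hxb, hxp⟩ := hxy
        obtain ⟨y, hy', hyb, hpy⟩ := hyx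
        have e : x.1 = y.1 := hh.inj_right hx' hy' (hxb.trans hyb.symm)
        exact hp x hx' (le_antisymm hxp (e.symm ▸ hpy))
      · exact congrArg some (le_antisymm hxy hyx)
    have h3 : ∀ x ∈ starSet A, ∀ y ∈ starSet A, ∀ z ∈ starSet A, R x y → R y z → R x z := by
      rintro (_ | a) hx (_ | b) hy (_ | c) hz hxy hyz
      · trivial
      · exact hyz
      · trivial
      · -- none, some b, some c
        obtain ⟨x, hx', hxb, hpx⟩ := hxy
        obtain ⟨y, hy', hyc⟩ := (hmemA c).mp (some_mem_starSet_iff.mp hz)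
        exact ⟨y, hy', hyc, le_trans hpx ((hh x hx' y hy').mpr (by rw [hxb, hyc]; exact hyz))⟩
      · exact hxy
      · -- some a, none, some c
        obtain ⟨x, hx', hxa, hxp⟩ := hxy
        obtain ⟨y, hy', hyc, hpy⟩ := hyz
        calc a = x.2 := hxa.symm
          _ ≤ y.2 := (hh x hx' y hy').mp (le_trans hxp hpy)
          _ = c := hyc
      · -- some a, some b, none
        obtain ⟨y, hy', hyb, hyp⟩ := hyz
        obtain ⟨x, hx', hxa⟩ := (hmemA a).mp (some_mem_starSet_iff.mp hx)
        exact ⟨x, hx', hxa, le_trans ((hh x hx' y hy').mpr (by rw [hxa, hyb]; exact hxy)) hyp⟩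
      · exact le_trans hxy hyz
    have h4 : ∀ a ∈ A, ∀ b ∈ A, (R (some a) (some b) ↔ a ≤ b) := fun a _ b _ => Iff.rfl
    obtain ⟨q, hqA, hq⟩ := hQ A R h1 h2 h3 h4
    refine ⟨q, ?_⟩
    intro x hx y hy
    simp only [List.mem_cons] at hx hy
    rcases hx with rfl | hx <;> rcases hy with rfl | hy
    · exact iff_of_true le_rfl le_rfl
    · -- (p,q) vs y ∈ h : p ≤ y.1 ↔ q ≤ y.2
      have hy2 : y.2 ∈ A := (hmemA y.2).mpr ⟨y, hy, rfl⟩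
      rw [(hq y.2 hy2).2]
      constructor
      · intro hpy; exact ⟨y, hy, rfl, hpy⟩
      · rintro ⟨x, hx', hxy, hpx⟩
        exact le_trans hpx (le_of_eq (hh.inj_right hx' hy hxy))
    · -- x ∈ h vs (p,q) : x.1 ≤ p ↔ x.2 ≤ q
      have hx2 : x.2 ∈ A := (hmemA x.2).mpr ⟨x, hx, rfl⟩
      rw [(hq x.2 hx2).1]
      constructor
      · intro hxp; exact ⟨x, hx, rfl, hxp⟩
      · rintro ⟨y, hy', hyx, hyp⟩
        exact le_trans (le_of_eq (hh.inj_right hx hy' hyx.symm)) hyp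
    · exact hh x hx y hy

lemma extend_right_s6 (hP : ExtensionProperty P) (h : List (P × Q)) (hh : GoodPI h) (q : Q) :
    ∃ p : P, GoodPI ((p, q) :: h) := by
  obtain ⟨p, hp⟩ := extend_left_s6 hP (h.map Prod.swap) hh.swap q
  refine ⟨p, ?_⟩
  have := hp.swap
  simp only [List.map_cons, List.map_map, Prod.swap_swap_eq, List.map_id] at this
  exact this

lemma iso_of_extension {P Q : Type*} [PartialOrder P] [PartialOrder Q]
    [Countable P] [Countable Q]
    (hP : ExtensionProperty P) (hQ : ExtensionProperty Q) : Nonempty (P ≃o Q) := by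
  classical
  have neP : Nonempty P := by
    obtain ⟨p, -, -⟩ := hP ∅ Eq (fun x _ => rfl) (fun x _ y _ h _ => h)
      (fun x _ y _ z _ h h' => h.trans h') (by simp)
    exact ⟨p⟩
  have neQ : Nonempty Q := by
    obtain ⟨q, -, -⟩ := hQ ∅ Eq (fun x _ => rfl) (fun x _ y _ h _ => h)
      (fun x _ y _ z _ h h' => h.trans h') (by simp)
    exact ⟨q⟩
  obtain ⟨f, hf⟩ := exists_surjective_nat P
  obtain ⟨g, hg⟩ := exists_surjective_nat Q
  have step : ∀ (n : ℕ) (h : List (P × Q)), GoodPI h → ∃ h' : List (P × Q),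
      GoodPI h' ∧ (∀ x ∈ h, x ∈ h') ∧ (∃ y ∈ h', y.1 = f n) ∧ (∃ y ∈ h', y.2 = g n) := by
    intro n h hh
    obtain ⟨q, hq⟩ := extend_left_s6 hQ h hh (f n)
    obtain ⟨p, hp⟩ := extend_right_s6 hP _ hq (g n)
    refine ⟨(p, g n) :: (f n, q) :: h, hp, ?_, ⟨(f n, q), by simp⟩, ⟨(p, g n), by simp⟩⟩
    intro x hx; simp [hx]
  choose ext hext using step
  let H : ℕ → {l : List (P × Q) // GoodPI l} := fun n =>
    Nat.rec ⟨[], fun x hx => absurd hx (by simp)⟩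
      (fun n ih => ⟨ext n ih.1 ih.2, (hext n ih.1 ih.2).1⟩) n
  have hHsucc : ∀ n, (H (n + 1)).1 = ext n (H n).1 (H n).2 := fun n => rfl
  have hmono : ∀ m n, m ≤ n → ∀ x ∈ (H m).1, x ∈ (H n).1 := by
    intro m n hmn
    induction n, hmn using Nat.le_induction with
    | base => exact fun x hx => hx
    | succ n hn ih =>
      intro x hx
      rw [hHsucc n]
      exact (hext n (H n).1 (H n).2).2.1 x (ih x hx)
  have hcov1 : ∀ n, ∃ y ∈ (H (n + 1)).1, y.1 = f n := by
    intro n; rw [hHsucc n]; exact (hext n (H n).1 (H n).2).2.2.1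
  have hcov2 : ∀ n, ∃ y ∈ (H (n + 1)).1, y.2 = g n := by
    intro n; rw [hHsucc n]; exact (hext n (H n).1 (H n).2).2.2.2
  let G : P → Q → Prop := fun p q => ∃ n, (p, q) ∈ (H n).1
  have hG : ∀ {p q p' q'}, G p q → G p' q' → (p ≤ p' ↔ q ≤ q') := by
    rintro p q p' q' ⟨n, hn⟩ ⟨m, hm⟩
    exact (H (max n m)).2 (p, q) (hmono n _ (le_max_left n m) _ hn)
      (p', q') (hmono m _ (le_max_right n m) _ hm)
  have total : ∀ p : P, ∃ q, G p q := by
    intro p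
    obtain ⟨n, rfl⟩ := hf p
    obtain ⟨y, hy, hy1⟩ := hcov1 n
    exact ⟨y.2, n + 1, by rw [← hy1]; exact hy⟩
  have surjG : ∀ q : Q, ∃ p, G p q := by
    intro q
    obtain ⟨n, rfl⟩ := hg q
    obtain ⟨y, hy, hy2⟩ := hcov2 n
    exact ⟨y.1, n + 1, by rw [← hy2]; exact hy⟩
  let F : P → Q := fun p => (total p).choose
  have hF : ∀ p, G p (F p) := fun p => (total p).choose_spec
  have maprel : ∀ a b : P, a ≤ b ↔ F a ≤ F b := fun a b => hG (hF a) (hF b)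
  have inj : Function.Injective F := fun a b e =>
    le_antisymm ((maprel a b).mpr e.le) ((maprel b a).mpr e.ge)
  have surj : Function.Surjective F := by
    intro q
    obtain ⟨p, hp⟩ := surjG q
    exact ⟨p, le_antisymm ((hG (hF p) hp).mp le_rfl) ((hG hp (hF p)).mp le_rfl)⟩
  exact ⟨{ toEquiv := Equiv.ofBijective F ⟨inj, surj⟩,
           map_rel_iff' := fun {a b} => (maprel a b).symm }⟩

end BackForth

lemma interval_ext {P : Type*} [PartialOrder P] (hP : ExtensionProperty P) (s t : P)
    (hst : s < t) : ExtensionProperty {x : P // s < x ∧ x < t} := by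
  classical
  intro A R h1 h2 h3 h4
  set A' : Finset P := insert s (insert t (A.image Subtype.val)) with hA'
  have hmemA' : ∀ x : P, x ∈ A' ↔ x = s ∨ x = t ∨ ∃ q ∈ A, Subtype.val q = x := by
    intro x; simp [hA']
  set R' : Option P → Option P → Prop := fun x y =>
    match x, y with
    | some a, some b => a ≤ b
    | some a, none => a = s ∨ ∃ q ∈ A, Subtype.val q = a ∧ R (some q) none
    | none, some b => b = t ∨ ∃ q ∈ A, Subtype.val q = b ∧ R none (some q)
    | none, none => True
    with hR'
  have memA'cases : ∀ c : P, (some c : Option P) ∈ starSet A' →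
      c = s ∨ c = t ∨ ∃ q ∈ A, Subtype.val q = c :=
    fun c hc => (hmemA' c).mp (some_mem_starSet_iff.mp hc)
  have g1 : ∀ x ∈ starSet A', R' x x := by
    rintro (_ | a) _
    · trivial
    · exact le_refl a
  have g2 : ∀ x ∈ starSet A', ∀ y ∈ starSet A', R' x y → R' y x → x = y := by
    rintro (_ | a) hx (_ | b) hy hxy hyx
    · rfl
    · -- none, some b
      exfalso
      rcases hyx with hbs | ⟨q, hqA, hqb, hq⟩
      · rcases hxy with hbt | ⟨q', hq'A, hq'b, hq'⟩
        · exact hst.ne (hbs ▸ hbt)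
        · exact absurd (hq'b.trans hbs) (ne_of_gt q'.2.1)
      · rcases hxy with hbt | ⟨q', hq'A, hq'b, hq'⟩
        · exact absurd (hqb.trans hbt) (ne_of_lt q.2.2)
        · obtain rfl : q = q' := Subtype.ext (hqb.trans hq'b.symm)
          exact absurd
            (h2 (some q) (some_mem_starSet hqA) none none_mem_starSet hq hq') (by simp)
    · -- some a, none
      exfalso
      rcases hxy with has | ⟨q, hqA, hqa, hq⟩
      · rcases hyx with hat | ⟨q', hq'A, hq'a, hq'⟩
        · exact hst.ne (has ▸ hat)
        · exact absurd (hq'a.trans has) (ne_of_gt q'.2.1)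
      · rcases hyx with hat | ⟨q', hq'A, hq'a, hq'⟩
        · exact absurd (hqa.trans hat) (ne_of_lt q.2.2)
        · obtain rfl : q = q' := Subtype.ext (hqa.trans hq'a.symm)
          exact absurd
            (h2 (some q) (some_mem_starSet hqA) none none_mem_starSet hq hq') (by simp)
    · exact congrArg some (le_antisymm hxy hyx)
  have g3 : ∀ x ∈ starSet A', ∀ y ∈ starSet A', ∀ z ∈ starSet A', R' x y → R' y z → R' x z := by
    rintro (_ | a) hx (_ | b) hy (_ | c) hz hxy hyz
    · trivial
    · exact hyz
    · trivial
    · -- none, some b, some c : R' ⋆ b, b ≤ c ⊢ R' ⋆ c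
      rcases hxy with hbt | ⟨q, hqA, hqb, hq⟩
      · rcases memA'cases c hz with hcs | hct | ⟨q', hq'A, hq'c⟩
        · exact absurd (lt_of_lt_of_le hst (hbt ▸ hcs ▸ hyz)) (lt_irrefl s)
        · exact Or.inl hct
        · exact absurd (lt_of_le_of_lt (hbt ▸ hyz) (hq'c ▸ q'.2.2)) (lt_irrefl t)
      · rcases memA'cases c hz with hcs | hct | ⟨q', hq'A, hq'c⟩
        · exact absurd (lt_of_lt_of_le (hqb ▸ q.2.1) (hcs ▸ hyz)) (lt_irrefl s)
        · exact Or.inl hct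
        · refine Or.inr ⟨q', hq'A, hq'c, ?_⟩
          have hqq' : R (some q) (some q') := (h4 q hqA q' hq'A).mpr
            (Subtype.coe_le_coe.mp (by rw [hqb, hq'c]; exact hyz))
          exact h3 none none_mem_starSet (some q) (some_mem_starSet hqA)
            (some q') (some_mem_starSet hq'A) hq hqq'
    · exact hxy
    · -- some a, none, some c : R' a ⋆, R' ⋆ c ⊢ a ≤ c
      rcases hxy with has | ⟨q, hqA, hqa, hq⟩
      · rcases hyz with hct | ⟨q', hq'A, hq'c, hq'⟩
        · rw [has, hct]; exact hst.le
        · rw [has, ← hq'c]; exact q'.2.1.le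
      · rcases hyz with hct | ⟨q', hq'A, hq'c, hq'⟩
        · rw [← hqa, hct]; exact q.2.2.le
        · have hqq' : R (some q) (some q') :=
            h3 (some q) (some_mem_starSet hqA) none none_mem_starSet
              (some q') (some_mem_starSet hq'A) hq hq'
          rw [← hqa, ← hq'c]
          exact Subtype.coe_le_coe.mpr ((h4 q hqA q' hq'A).mp hqq')
    · -- some a, some b, none : a ≤ b, R' b ⋆ ⊢ R' a ⋆
      rcases hyz with hbs | ⟨q, hqA, hqb, hq⟩
      · rcases memA'cases a hx with has | hat | ⟨q', hq'A, hq'a⟩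
        · exact Or.inl has
        · exact absurd (lt_of_lt_of_le hst (hat ▸ hbs ▸ hxy)) (lt_irrefl s)
        · exact absurd (lt_of_lt_of_le (hq'a ▸ q'.2.1) (hbs ▸ hxy)) (lt_irrefl s)
      · rcases memA'cases a hx with has | hat | ⟨q', hq'A, hq'a⟩
        · exact Or.inl has
        · exact absurd (lt_of_le_of_lt (hat ▸ hxy) (hqb ▸ q.2.2)) (lt_irrefl t)
        · refine Or.inr ⟨q', hq'A, hq'a, ?_⟩
          have hq'q : R (some q') (some q) := (h4 q' hq'A q hqA).mpr
            (Subtype.coe_le_coe.mp (by rw [hq'a, hqb]; exact hxy))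
          exact h3 (some q') (some_mem_starSet hq'A) (some q) (some_mem_starSet hqA)
            none none_mem_starSet hq'q hq
    · exact le_trans hxy hyz
  have g4 : ∀ a ∈ A', ∀ b ∈ A', (R' (some a) (some b) ↔ a ≤ b) := fun a _ b _ => Iff.rfl
  obtain ⟨p, hpA', hp⟩ := hP A' R' g1 g2 g3 g4
  have hsA' : s ∈ A' := (hmemA' s).mpr (Or.inl rfl)
  have htA' : t ∈ A' := (hmemA' t).mpr (Or.inr (Or.inl rfl))
  have hsp : s < p :=
    lt_of_le_of_ne ((hp s hsA').1.mpr (Or.inl rfl)) fun e => hpA' (e ▸ hsA')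
  have hpt : p < t :=
    lt_of_le_of_ne ((hp t htA').2.mpr (Or.inl rfl)) fun e => hpA' (e.symm ▸ htA')
  refine ⟨⟨p, hsp, hpt⟩, ?_, ?_⟩
  · intro hmem
    exact hpA' ((hmemA' p).mpr (Or.inr (Or.inr ⟨⟨p, hsp, hpt⟩, hmem, rfl⟩)))
  · intro q hqA
    have hqvA' : Subtype.val q ∈ A' := (hmemA' _).mpr (Or.inr (Or.inr ⟨q, hqA, rfl⟩))
    constructor
    · constructor
      · intro hle
        rcases (hp q.val hqvA').1.mp hle with h | ⟨q', hq'A, hq'v, hq'⟩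
        · exact absurd h (ne_of_gt q.2.1)
        · exact (Subtype.ext hq'v : q' = q) ▸ hq'
      · intro hr
        exact (hp q.val hqvA').1.mpr (Or.inr ⟨q, hqA, rfl, hr⟩)
    · constructor
      · intro hle
        rcases (hp q.val hqvA').2.mp hle with h | ⟨q', hq'A, hq'v, hq'⟩
        · exact absurd h (ne_of_lt q.2.2)
        · exact (Subtype.ext hq'v : q' = q) ▸ hq'
      · intro hr
        exact (hp q.val hqvA').2.mpr (Or.inr ⟨q, hqA, rfl, hr⟩)

/-- In the random partial order, any open interval `(s, t)` with `s < t`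
is order isomorphic to the whole order. -/
theorem random_partial_order_interval_iso
    (P : Type*) [PartialOrder P] [Countable P] [Infinite P]
    (hP : ExtensionProperty P) (s t : P) (hst : s < t) :
    Nonempty ({x : P // s < x ∧ x < t} ≃o P) := by
  exact iso_of_extension (interval_ext hP s t hst) hP
end

section
/- Let (P, ≤) be a partial order with the extension property. Then for all x, y ∈ P: (x < y ∨ x ⊥ y) if and only if there exists z ∈ P with z < y and z ⊥ x. -/
/-- In a partial order with the extension property,
`x < y ∨ x ⊥ y` iff there is `z` with `z < y` and `z ⊥ x`. -/
theorem lt_or_incomp_iff_exists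
    (P : Type*) [PartialOrder P] (hP : ExtensionProperty P) :
    ∀ x y : P, (x < y ∨ Incomp x y) ↔ ∃ z : P, z < y ∧ Incomp z x := by
  classical
  intro x y
  constructor
  · intro h
    have hyx : ¬ y ≤ x := by
      rcases h with h | h
      · exact h.not_ge
      · exact h.2
    set A : Finset P := {x, y} with hA
    set R : Option P → Option P → Prop := fun u v =>
      match u, v with
      | some a, some b => a ≤ b
      | none, some a => y ≤ a
      | some _, none => False
      | none, none => True
      with hR
    obtain ⟨p, hpA, hp⟩ := hP A R
      (by
        rintro (_ | u) _
        · exact trivial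
        · exact le_refl u)
      (by
        rintro (_ | u) _ (_ | v) _ h1 h2
        · rfl
        · exact h2.elim
        · exact h1.elim
        · exact congrArg some (le_antisymm h1 h2))
      (by
        rintro (_ | u) _ (_ | v) _ (_ | w) _ h1 h2
        · exact trivial
        · exact h2
        · exact h2.elim
        · exact le_trans h1 h2
        · exact h1.elim
        · exact h1.elim
        · exact h2.elim
        · exact le_trans h1 h2)
      (by intro a _ b _; exact Iff.rfl)
    have hx : x ∈ A := by simp [hA]
    have hy : y ∈ A := by simp [hA]
    have hpx := hp x hx
    have hpy := hp y hy
    refine ⟨p, ?_, ?_, ?_⟩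
    · refine lt_of_le_of_ne (hpy.2.mpr (le_refl y)) ?_
      intro hpe
      exact hpy.1.mp (le_of_eq hpe.symm)
    · intro hle
      exact hyx (hpx.2.mp hle)
    · intro hle
      exact hpx.1.mp hle
  · rintro ⟨z, hzy, hzx⟩
    by_cases hxy : x ≤ y
    · left
      refine lt_of_le_of_ne hxy ?_
      rintro rfl
      exact hzx.1 hzy.le
    · right
      refine ⟨hxy, fun hyx => ?_⟩
      exact hzx.1 (hzy.le.trans hyx)
end

section
/- Let (P, ≤) be a partial order with the extension property. For x, y, a, b, c, d ∈ P let ψ(x,y,a,b,c,d) denote the conjunction: x < a ∧ a < c ∧ x < b ∧ b < d ∧ y < c ∧ y < d ∧ Cycl(x,a,y) ∧ Cycl(x,b,y) ∧ Cycl(y,c,b) ∧ Cycl(y,d,a) ∧ Cycl(b,d,c) ∧ Cycl(a,c,d). Then for all x, y ∈ P: x ⊥ y if and only if there exist a, b, c, d ∈ P with ψ(x,y,a,b,c,d). -/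
def Cycl {P : Type*} [PartialOrder P] (x y z : P) : Prop :=
  (x < y ∧ y < z) ∨ (y < z ∧ z < x) ∨ (z < x ∧ x < y) ∨
  (x < y ∧ Incomp z x ∧ Incomp z y) ∨ (y < z ∧ Incomp x y ∧ Incomp x z) ∨
  (z < x ∧ Incomp y z ∧ Incomp y x)

def psi {P : Type*} [PartialOrder P] (x y a b c d : P) : Prop :=
  x < a ∧ a < c ∧ x < b ∧ b < d ∧ y < c ∧ y < d ∧
  Cycl x a y ∧ Cycl x b y ∧ Cycl y c b ∧ Cycl y d a ∧ Cycl b d c ∧ Cycl a c d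

lemma exists_above {P : Type*} [PartialOrder P] (hP : ExtensionProperty P)
    (A : Finset P) (S : Set P) (hS : ∀ u v : P, u ≤ v → v ∈ S → u ∈ S) :
    ∃ p : P, p ∉ A ∧ ∀ a ∈ A, (a ≤ p ↔ a ∈ S) ∧ ¬ p ≤ a := by
  obtain ⟨p, hp, h⟩ := hP A
    (fun u v => match u, v with
      | some a, some b => a ≤ b
      | some a, none => a ∈ S
      | none, some _ => False
      | none, none => True)
    (by rintro (_|a) hx <;> simp)
    (by rintro (_|a) hx (_|b) hy hab hba <;> simp_all
        exact le_antisymm hab hba)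
    (by rintro (_|a) hx (_|b) hy (_|c) hz hab hbc <;> simp_all
        · exact hS a b hab hbc
        · exact hab.trans hbc)
    (by intro a _ b _; exact Iff.rfl)
  exact ⟨p, hp, fun a ha => ⟨(h a ha).1, fun hpa => ((h a ha).2.mp hpa : False)⟩⟩

/-- In a partial order with the extension property, incomparability
is defined by the formula `∃ a b c d, ψ(x,y,a,b,c,d)`. -/
theorem incomp_iff_exists_psi
    (P : Type*) [PartialOrder P] (hP : ExtensionProperty P) :
    ∀ x y : P, Incomp x y ↔ ∃ a b c d : P, psi x y a b c d := by
  classical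
  intro x y
  constructor
  · rintro ⟨hxy, hyx⟩
    -- construct a
    obtain ⟨a, haA, ha⟩ := exists_above hP {x, y} {z | z ≤ x}
      (fun u v huv hv => le_trans huv hv)
    have hxa : x ≤ a := (ha x (by simp)).1.mpr le_rfl
    have hax : ¬ a ≤ x := (ha x (by simp)).2
    have hya : ¬ y ≤ a := fun h => hyx ((ha y (by simp)).1.mp h)
    have hay : ¬ a ≤ y := (ha y (by simp)).2
    -- construct b
    obtain ⟨b, hbA, hb⟩ := exists_above hP {x, y, a} {z | z ≤ x}
      (fun u v huv hv => le_trans huv hv)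
    have hxb : x ≤ b := (hb x (by simp)).1.mpr le_rfl
    have hbx : ¬ b ≤ x := (hb x (by simp)).2
    have hyb : ¬ y ≤ b := fun h => hyx ((hb y (by simp)).1.mp h)
    have hby : ¬ b ≤ y := (hb y (by simp)).2
    have hab : ¬ a ≤ b := fun h => hax ((hb a (by simp)).1.mp h)
    have hba : ¬ b ≤ a := (hb a (by simp)).2
    -- construct c
    obtain ⟨c, hcA, hc⟩ := exists_above hP {x, y, a, b} {z | z ≤ a ∨ z ≤ y}
      (fun u v huv hv => hv.elim (fun h => Or.inl (huv.trans h)) (fun h => Or.inr (huv.trans h)))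
    have hac : a ≤ c := (hc a (by simp)).1.mpr (Or.inl le_rfl)
    have hyc : y ≤ c := (hc y (by simp)).1.mpr (Or.inr le_rfl)
    have hca : ¬ c ≤ a := (hc a (by simp)).2
    have hcy : ¬ c ≤ y := (hc y (by simp)).2
    have hcb : ¬ c ≤ b := (hc b (by simp)).2
    have hbc : ¬ b ≤ c := fun h => ((hc b (by simp)).1.mp h).elim hba (fun h' => hxy (hxb.trans h'))
    -- construct d
    obtain ⟨d, hdA, hd⟩ := exists_above hP {x, y, a, b, c} {z | z ≤ b ∨ z ≤ y}
      (fun u v huv hv => hv.elim (fun h => Or.inl (huv.trans h)) (fun h => Or.inr (huv.trans h)))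
    have hbd : b ≤ d := (hd b (by simp)).1.mpr (Or.inl le_rfl)
    have hyd : y ≤ d := (hd y (by simp)).1.mpr (Or.inr le_rfl)
    have hdb : ¬ d ≤ b := (hd b (by simp)).2
    have hdy : ¬ d ≤ y := (hd y (by simp)).2
    have hda : ¬ d ≤ a := (hd a (by simp)).2
    have hdc : ¬ d ≤ c := (hd c (by simp)).2
    have had : ¬ a ≤ d := fun h => ((hd a (by simp)).1.mp h).elim hab (fun h' => hxy (hxa.trans h'))
    have hcd : ¬ c ≤ d := fun h => ((hd c (by simp)).1.mp h).elim hcb hcy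
    -- strict inequalities
    have lxa : x < a := lt_of_le_not_ge hxa hax
    have lxb : x < b := lt_of_le_not_ge hxb hbx
    have lac : a < c := lt_of_le_not_ge hac hca
    have lyc : y < c := lt_of_le_not_ge hyc hcy
    have lbd : b < d := lt_of_le_not_ge hbd hdb
    have lyd : y < d := lt_of_le_not_ge hyd hdy
    refine ⟨a, b, c, d, lxa, lac, lxb, lbd, lyc, lyd, ?_, ?_, ?_, ?_, ?_, ?_⟩
    · exact Or.inr (Or.inr (Or.inr (Or.inl ⟨lxa, ⟨hyx, hxy⟩, ⟨hya, hay⟩⟩)))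
    · exact Or.inr (Or.inr (Or.inr (Or.inl ⟨lxb, ⟨hyx, hxy⟩, ⟨hyb, hby⟩⟩)))
    · exact Or.inr (Or.inr (Or.inr (Or.inl ⟨lyc, ⟨hby, hyb⟩, ⟨hbc, hcb⟩⟩)))
    · exact Or.inr (Or.inr (Or.inr (Or.inl ⟨lyd, ⟨hay, hya⟩, ⟨had, hda⟩⟩)))
    · exact Or.inr (Or.inr (Or.inr (Or.inl ⟨lbd, ⟨hcb, hbc⟩, ⟨hcd, hdc⟩⟩)))
    · exact Or.inr (Or.inr (Or.inr (Or.inl ⟨lac, ⟨hda, had⟩, ⟨hdc, hcd⟩⟩)))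
  · rintro ⟨a, b, c, d, lxa, lac, lxb, lbd, lyc, lyd, Cxay, Cxby, Cycb, Cyda, Cbdc, Cacd⟩
    have hne : x ≠ y := by
      rintro rfl
      rcases Cxay with ⟨h1, h2⟩ | ⟨h1, h2⟩ | ⟨h1, h2⟩ | ⟨h1, h2, h3⟩ | ⟨h1, h2, h3⟩ | ⟨h1, h2, h3⟩
      · exact absurd (h1.trans h2) (lt_irrefl x)
      · exact absurd h2 (lt_irrefl x)
      · exact absurd h1 (lt_irrefl x)
      · exact h2.1 le_rfl
      · exact h3.1 le_rfl
      · exact absurd h1 (lt_irrefl x)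
    constructor
    · intro hxy'
      have hxy : x < y := lt_of_le_of_ne hxy' hne
      -- derive a < y from Cycl x a y
      have hay : a < y := by
        rcases Cxay with ⟨h1, h2⟩ | ⟨h1, h2⟩ | ⟨h1, h2⟩ | ⟨h1, h2, h3⟩ | ⟨h1, h2, h3⟩ | ⟨h1, h2, h3⟩
        · exact h2
        · exact h1
        · exact absurd (h1.trans hxy) (lt_irrefl y)
        · exact absurd hxy.le h2.2
        · exact h1
        · exact absurd (h1.trans hxy) (lt_irrefl y)
      have hby : b < y := by
        rcases Cxby with ⟨h1, h2⟩ | ⟨h1, h2⟩ | ⟨h1, h2⟩ | ⟨h1, h2, h3⟩ | ⟨h1, h2, h3⟩ | ⟨h1, h2, h3⟩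
        · exact h2
        · exact h1
        · exact absurd (h1.trans hxy) (lt_irrefl y)
        · exact absurd hxy.le h2.2
        · exact h1
        · exact absurd (h1.trans hxy) (lt_irrefl y)
      have had : a < d := hay.trans lyd
      have hbc : b < c := hby.trans lyc
      -- Cycl a c d forces c < d
      have hcd : c < d := by
        rcases Cacd with ⟨h1, h2⟩ | ⟨h1, h2⟩ | ⟨h1, h2⟩ | ⟨h1, h2, h3⟩ | ⟨h1, h2, h3⟩ | ⟨h1, h2, h3⟩
        · exact h2
        · exact h1
        · exact absurd (h1.trans had) (lt_irrefl d)
        · exact absurd had.le h2.2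
        · exact h1
        · exact absurd (h1.trans had) (lt_irrefl d)
      -- Cycl b d c gives contradiction
      rcases Cbdc with ⟨h1, h2⟩ | ⟨h1, h2⟩ | ⟨h1, h2⟩ | ⟨h1, h2, h3⟩ | ⟨h1, h2, h3⟩ | ⟨h1, h2, h3⟩
      · exact absurd (h2.trans hcd) (lt_irrefl d)
      · exact absurd (h1.trans hcd) (lt_irrefl d)
      · exact absurd (h1.trans hbc) (lt_irrefl c)
      · exact h3.1 hcd.le
      · exact absurd (h1.trans hcd) (lt_irrefl d)
      · exact absurd (h1.trans hbc) (lt_irrefl c)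
    · intro hyx'
      have hyx : y < x := lt_of_le_of_ne hyx' (Ne.symm hne)
      have hyb : y < b := hyx.trans lxb
      have hya : y < a := hyx.trans lxa
      have hcb : c < b := by
        rcases Cycb with ⟨h1, h2⟩ | ⟨h1, h2⟩ | ⟨h1, h2⟩ | ⟨h1, h2, h3⟩ | ⟨h1, h2, h3⟩ | ⟨h1, h2, h3⟩
        · exact h2
        · exact h1
        · exact absurd (h1.trans hyb) (lt_irrefl b)
        · exact absurd hyb.le h2.2
        · exact h1
        · exact absurd (h1.trans hyb) (lt_irrefl b)
      have hda : d < a := by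
        rcases Cyda with ⟨h1, h2⟩ | ⟨h1, h2⟩ | ⟨h1, h2⟩ | ⟨h1, h2, h3⟩ | ⟨h1, h2, h3⟩ | ⟨h1, h2, h3⟩
        · exact h2
        · exact h1
        · exact absurd (h1.trans hya) (lt_irrefl a)
        · exact absurd hya.le h2.2
        · exact h1
        · exact absurd (h1.trans hya) (lt_irrefl a)
      exact absurd (((hcb.trans lbd).trans hda).trans lac) (lt_irrefl c)
end

section
/- Let (P, ≤) be a partial order with the extension property, and let φ(x,y,z,v) denote the formula: ∃u, (u ⊥ v ∧ Low(u,y,z) ∧ Low(y,x,v) ∧ Low(z,x,v)). Then for all x, y, z ∈ P: (i) Abv(x,y,z) holds if and only if there exist v₁, v₂ ∈ P with φ(x,y,z,v₁) and φ(v₂,y,z,x); and (ii) U(x,y,z) holds if and only if there exists v ∈ P with φ(x,y,z,v). -/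
def Low {P : Type*} [PartialOrder P] (x y z : P) : Prop :=
  (x < y ∧ Incomp z x ∧ Incomp z y) ∨ (x < z ∧ Incomp y x ∧ Incomp y z)

def Abv {P : Type*} [PartialOrder P] (x y z : P) : Prop :=
  (y < x ∧ Incomp z x ∧ Incomp z y) ∨ (z < x ∧ Incomp y x ∧ Incomp y z)

def U {P : Type*} [PartialOrder P] (x y z : P) : Prop :=
  (y < x ∨ z < x) ∧ Incomp y z

def phi {P : Type*} [PartialOrder P] (x y z v : P) : Prop :=
  ∃ u : P, Incomp u v ∧ Low u y z ∧ Low y x v ∧ Low z x v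

section Aux

variable {P : Type*} [PartialOrder P]

/-- relation putting ⋆ below exactly the points satisfying `g`. -/
def RD (g : P → Prop) : Option P → Option P → Prop
  | some a, some b => a ≤ b
  | none, some a => g a
  | some _, none => False
  | none, none => True

/-- relation putting ⋆ above exactly the points satisfying `f`. -/
def RU (f : P → Prop) : Option P → Option P → Prop
  | some a, some b => a ≤ b
  | none, some _ => False
  | some a, none => f a
  | none, none => True

lemma extRD (hP : ExtensionProperty P) (A : Finset P) (g : P → Prop)
    (hg : ∀ a b : P, g a → a ≤ b → g b) :
    ∃ p : P, p ∉ A ∧ ∀ a ∈ A, ¬ a ≤ p ∧ (p ≤ a ↔ g a) := by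
  obtain ⟨p, hpA, hp⟩ := hP A (RD g)
    (by rintro (_|a) - <;> simp [RD])
    (by rintro (_|a) - (_|b) - h1 h2 <;> simp_all [RD]; exact le_antisymm h1 h2)
    (by rintro (_|a) - (_|b) - (_|c) - h1 h2 <;> simp_all [RD]
        exacts [hg _ _ h1 h2, le_trans h1 h2])
    (fun a _ b _ => Iff.rfl)
  exact ⟨p, hpA, fun a ha => ⟨fun h => (hp a ha).1.mp h, (hp a ha).2⟩⟩

lemma extRU (hP : ExtensionProperty P) (A : Finset P) (f : P → Prop)
    (hf : ∀ a b : P, a ≤ b → f b → f a) :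
    ∃ p : P, p ∉ A ∧ ∀ a ∈ A, (a ≤ p ↔ f a) ∧ ¬ p ≤ a := by
  obtain ⟨p, hpA, hp⟩ := hP A (RU f)
    (by rintro (_|a) - <;> simp [RU])
    (by rintro (_|a) - (_|b) - h1 h2 <;> simp_all [RU]; exact le_antisymm h1 h2)
    (by rintro (_|a) - (_|b) - (_|c) - h1 h2 <;> simp_all [RU]
        exacts [hf _ _ h1 h2, le_trans h1 h2])
    (fun a _ b _ => Iff.rfl)
  exact ⟨p, hpA, fun a ha => ⟨(hp a ha).1, fun h => (hp a ha).2.mp h⟩⟩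

lemma ext_below (hP : ExtensionProperty P) (A : Finset P) (c : P) :
    ∃ p : P, p ∉ A ∧ ∀ a ∈ A, ¬ a ≤ p ∧ (p ≤ a ↔ c ≤ a) :=
  extRD hP A (fun a => c ≤ a) fun _ _ h h' => h.trans h'

lemma ext_above (hP : ExtensionProperty P) (A : Finset P) (c : P) :
    ∃ p : P, p ∉ A ∧ ∀ a ∈ A, (a ≤ p ↔ a ≤ c) ∧ ¬ p ≤ a :=
  extRU hP A (fun a => a ≤ c) fun _ _ h h' => h.trans h'

lemma ext_incomp (hP : ExtensionProperty P) (A : Finset P) :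
    ∃ p : P, p ∉ A ∧ ∀ a ∈ A, ¬ a ≤ p ∧ ¬ p ≤ a := by
  obtain ⟨p, h1, h2⟩ := extRD hP A (fun _ => False) (fun _ _ h _ => h)
  exact ⟨p, h1, fun a ha => ⟨(h2 a ha).1, fun h => (h2 a ha).2.mp h⟩⟩

lemma Incomp.symm {x y : P} (h : Incomp x y) : Incomp y x := ⟨h.2, h.1⟩

lemma low_symm {u y z : P} : Low u y z ↔ Low u z y := or_comm

lemma phi_symm {x y z v : P} : phi x y z v ↔ phi x z y v := by
  refine exists_congr fun u => ?_
  rw [low_symm]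
  tauto

lemma phi_imp_U {x y z v : P} (h : phi x y z v) : U x y z := by
  obtain ⟨u, huv, huyz, hyxv, hzxv⟩ := h
  have hyz : Incomp y z := by
    rcases huyz with ⟨-, -, h⟩ | ⟨-, -, h⟩
    · exact h.symm
    · exact h
  refine ⟨?_, hyz⟩
  rcases hyxv with ⟨h1, -⟩ | ⟨h1, -, -⟩
  · exact Or.inl h1
  rcases hzxv with ⟨h2, -⟩ | ⟨h2, -, -⟩
  · exact Or.inr h2
  -- both y < v and z < v : contradicts the witness u
  exfalso
  rcases huyz with ⟨h3, -, -⟩ | ⟨h3, -, -⟩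
  · exact huv.1 (h3.le.trans h1.le)
  · exact huv.1 (h3.le.trans h2.le)

lemma U_aux (hP : ExtensionProperty P) {x y z : P}
    (hyx : y < x) (hyz : Incomp y z) : ∃ v, phi x y z v := by
  classical
  by_cases hzx : z < x
  · -- take v incomparable to everything
    obtain ⟨v, hvA, hv⟩ := ext_incomp hP {x, y, z}
    have hvx := hv x (by simp)
    have hvy := hv y (by simp)
    have hvz := hv z (by simp)
    obtain ⟨u, huA, hu⟩ := ext_below hP {y, z, v} y
    have huy := hu y (by simp)
    have huz := hu z (by simp)
    have huv := hu v (by simp)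
    have huy' : u < y := lt_of_le_of_ne (huy.2.mpr le_rfl) (by rintro rfl; simp at huA)
    exact ⟨v, u, ⟨fun h => hvy.1 (huv.2.mp h), huv.1⟩,
      Or.inl ⟨huy', ⟨fun h => hyz.2 (h.trans huy'.le), fun h => hyz.1 (huz.2.mp h)⟩,
        hyz.symm⟩,
      Or.inl ⟨hyx, ⟨hvy.2, hvy.1⟩, ⟨hvx.2, hvx.1⟩⟩,
      Or.inl ⟨hzx, ⟨hvz.2, hvz.1⟩, ⟨hvx.2, hvx.1⟩⟩⟩
  · -- z ⊥ x : take v strictly above z, incomparable to x and y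
    have hzx' : Incomp z x := by
      constructor
      · intro h
        rcases lt_or_eq_of_le h with h' | rfl
        · exact hzx h'
        · exact hyz.1 hyx.le
      · intro h
        exact hyz.1 (hyx.le.trans h)
    obtain ⟨v, hvA, hv⟩ := ext_above hP {x, y, z} z
    have hvx := hv x (by simp)
    have hvy := hv y (by simp)
    have hvz := hv z (by simp)
    have hzv : z < v := lt_of_le_of_ne (hvz.1.mpr le_rfl) (by rintro rfl; simp at hvA)
    have hvx' : Incomp v x := ⟨hvx.2, fun h => hzx'.2 (hvx.1.mp h)⟩
    have hvy' : Incomp v y := ⟨hvy.2, fun h => hyz.1 (hvy.1.mp h)⟩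
    obtain ⟨u, huA, hu⟩ := ext_below hP {y, z, v} y
    have huy := hu y (by simp)
    have huz := hu z (by simp)
    have huv := hu v (by simp)
    have huy' : u < y := lt_of_le_of_ne (huy.2.mpr le_rfl) (by rintro rfl; simp at huA)
    exact ⟨v, u, ⟨fun h => hvy'.2 (huv.2.mp h), huv.1⟩,
      Or.inl ⟨huy', ⟨fun h => hyz.2 (h.trans huy'.le), fun h => hyz.1 (huz.2.mp h)⟩,
        hyz.symm⟩,
      Or.inl ⟨hyx, hvy', hvx'⟩,
      Or.inr ⟨hzv, hzx'.symm, hvx'.symm⟩⟩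

lemma U_iff_phi (hP : ExtensionProperty P) {x y z : P} :
    U x y z ↔ ∃ v, phi x y z v := by
  constructor
  · rintro ⟨h1 | h1, hyz⟩
    · exact U_aux hP h1 hyz
    · obtain ⟨v, hv⟩ := U_aux hP h1 hyz.symm
      exact ⟨v, phi_symm.mpr hv⟩
  · rintro ⟨v, hv⟩
    exact phi_imp_U hv

lemma abv_aux (hP : ExtensionProperty P) {x y z : P}
    (hyx : y < x) (hzx : Incomp z x) (hzy : Incomp z y) : ∃ v₂, phi v₂ y z x := by
  classical
  obtain ⟨v, hvA, hv⟩ := ext_above hP {x, y, z} z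
  have hvx := hv x (by simp)
  have hvy := hv y (by simp)
  have hvz := hv z (by simp)
  have hzv : z < v := lt_of_le_of_ne (hvz.1.mpr le_rfl) (by rintro rfl; simp at hvA)
  have hvx' : Incomp v x := ⟨hvx.2, fun h => hzx.2 (hvx.1.mp h)⟩
  have hvy' : Incomp v y := ⟨hvy.2, fun h => hzy.2 (hvy.1.mp h)⟩
  obtain ⟨u, huA, hu⟩ := ext_below hP {x, y, z} z
  have hux := hu x (by simp)
  have huy := hu y (by simp)
  have huz := hu z (by simp)
  have huz' : u < z := lt_of_le_of_ne (huz.2.mpr le_rfl) (by rintro rfl; simp at huA)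
  exact ⟨v, u, ⟨fun h => hzx.1 (hux.2.mp h), hux.1⟩,
    Or.inr ⟨huz', ⟨fun h => hzy.2 (h.trans huz'.le), fun h => hzy.1 (huy.2.mp h)⟩,
      ⟨hzy.2, hzy.1⟩⟩,
    Or.inr ⟨hyx, hvy', hvx'⟩,
    Or.inl ⟨hzv, hzx.symm, hvx'.symm⟩⟩

end Aux

/-- In a partial order with the extension property, `Abv` and `U`
are defined from `Low` via the formula `φ`. -/
theorem abv_and_u_definable_from_low
    (P : Type*) [PartialOrder P] (hP : ExtensionProperty P) :
    ∀ x y z : P,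
      (Abv x y z ↔ ∃ v₁ v₂ : P, phi x y z v₁ ∧ phi v₂ y z x) ∧
      (U x y z ↔ ∃ v : P, phi x y z v) := by
  intro x y z
  refine ⟨⟨?_, ?_⟩, U_iff_phi hP⟩
  · rintro (⟨hyx, hzx, hzy⟩ | ⟨hzx, hyx, hyz⟩)
    · obtain ⟨v₁, hv₁⟩ := (U_iff_phi hP).mp ⟨Or.inl hyx, hzy.symm⟩
      obtain ⟨v₂, hv₂⟩ := abv_aux hP hyx hzx hzy
      exact ⟨v₁, v₂, hv₁, hv₂⟩
    · obtain ⟨v₁, hv₁⟩ := (U_iff_phi hP).mp ⟨Or.inr hzx, hyz⟩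
      obtain ⟨v₂, hv₂⟩ := abv_aux hP hzx hyx hyz
      exact ⟨v₁, v₂, hv₁, phi_symm.mpr hv₂⟩
  · rintro ⟨v₁, v₂, hv₁, hv₂⟩
    obtain ⟨h1, hyz⟩ := phi_imp_U hv₁
    -- not both y < x and z < x, using hv₂
    have hnot : ¬ (y < x ∧ z < x) := by
      rintro ⟨hyx, hzx⟩
      obtain ⟨u, hux, huyz, hyv, hzv⟩ := hv₂
      have h2 : Incomp v₂ y ∧ Incomp v₂ x := by
        rcases hyv with ⟨-, hxy, -⟩ | ⟨-, h, h'⟩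
        · exact absurd hyx.le hxy.2
        · exact ⟨h, h'⟩
      have h3 : Incomp v₂ z := by
        rcases hzv with ⟨-, hxz, -⟩ | ⟨-, h, -⟩
        · exact absurd hzx.le hxz.2
        · exact h
      rcases huyz with ⟨h4, -, -⟩ | ⟨h4, -, -⟩
      · exact hux.1 (h4.le.trans hyx.le)
      · exact hux.1 (h4.le.trans hzx.le)
    by_cases hyx : y < x
    · have hzx : ¬ z < x := fun h => hnot ⟨hyx, h⟩
      refine Or.inl ⟨hyx, ⟨?_, fun h => hyz.1 (hyx.le.trans h)⟩, hyz.symm⟩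
      intro h
      rcases lt_or_eq_of_le h with h' | rfl
      · exact hzx h'
      · exact hyz.1 hyx.le
    · have hzx : z < x := h1.resolve_left hyx
      refine Or.inr ⟨hzx, ⟨?_, fun h => hyz.2 (hzx.le.trans h)⟩, hyz⟩
      intro h
      rcases lt_or_eq_of_le h with h' | rfl
      · exact hyx h'
      · exact hyz.2 hzx.le
end

section
/- Let (P, ≤) be a partial order with the extension property, and let f : P → P be a map such that for all x, y, z ∈ P: Betw(x,y,z) implies Betw(f x, f y, f z), and x ⊥ y implies f x ⊥ f y. Then either f is strictly order preserving (for all x < y, f x < f y) or f is strictly order reversing (for all x < y, f y < f x). -/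
def Betw {P : Type*} [PartialOrder P] (x y z : P) : Prop :=
  (x < y ∧ y < z) ∨ (z < y ∧ y < x)

/-- In a partial order with the extension property, every finite set has a strict
upper bound. -/
lemma exists_strict_upper {P : Type*} [PartialOrder P] (hP : ExtensionProperty P)
    (A : Finset P) : ∃ p, ∀ a ∈ A, a < p := by
  classical
  set R : Option P → Option P → Prop := fun x y =>
    match x, y with
    | none, none => True
    | none, some _ => False
    | some _, none => True
    | some a, some b => a ≤ b with hR
  obtain ⟨p, hp, hp2⟩ := hP A R
    (by rintro (_|x) _ <;> simp [R])
    (by rintro (_|x) _ (_|y) _ hxy hyx <;> simp_all [R]; exact le_antisymm hxy hyx)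
    (by rintro (_|x) _ (_|y) _ (_|z) _ hxy hyz <;> simp_all [R]; exact le_trans hxy hyz)
    (by intro a _ b _; rfl)
  refine ⟨p, fun a ha => lt_of_le_of_ne ?_ (fun h => hp (h ▸ ha))⟩
  exact ((hp2 a ha).1).mpr trivial

/-- In a partial order with the extension property, a self-map
preserving `Betw` and `⊥` is strictly order preserving or strictly order reversing. -/
theorem betw_preserving_is_monotone_or_antitone
    (P : Type*) [PartialOrder P] (hP : ExtensionProperty P)
    (f : P → P)
    (hbetw : ∀ x y z : P, Betw x y z → Betw (f x) (f y) (f z))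
    (hbot : ∀ x y : P, Incomp x y → Incomp (f x) (f y)) :
    (∀ x y : P, x < y → f x < f y) ∨ (∀ x y : P, x < y → f y < f x) := by
  classical
  have step : ∀ u v w : P, u < v → v < w → (f u < f v ↔ f v < f w) := by
    intro u v w h1 h2
    rcases hbetw u v w (Or.inl ⟨h1, h2⟩) with ⟨h3, h4⟩ | ⟨h3, h4⟩
    · exact ⟨fun _ => h4, fun _ => h3⟩
    · exact ⟨fun h => absurd h (asymm h4), fun h => absurd h (asymm h3)⟩
  have comp : ∀ u v w : P, u < v → v < w → (f u < f v ∨ f v < f u) := by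
    intro u v w h1 h2
    rcases hbetw u v w (Or.inl ⟨h1, h2⟩) with ⟨h3, _⟩ | ⟨_, h4⟩
    · exact Or.inl h3
    · exact Or.inr h4
  have transfer : ∀ a b c d : P, a < b → c < d → (f a < f b ↔ f c < f d) := by
    intro a b c d hab hcd
    obtain ⟨e, he⟩ := exists_strict_upper hP {a, b, c, d}
    have hbe : b < e := he b (by simp)
    have hde : d < e := he d (by simp)
    obtain ⟨e', he'⟩ := exists_strict_upper hP {e}
    have hee' : e < e' := he' e (by simp)
    calc f a < f b ↔ f b < f e := step a b e hab hbe
      _ ↔ f e < f e' := step b e e' hbe hee'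
      _ ↔ f d < f e := (step d e e' hde hee').symm
      _ ↔ f c < f d := (step c d e hcd hde).symm
  by_cases h : ∀ x y : P, x < y → f x < f y
  · exact Or.inl h
  · right
    push_neg at h
    obtain ⟨x0, y0, hxy, hno⟩ := h
    intro x y hlt
    have hnot : ¬ f x < f y := fun hh => hno ((transfer x y x0 y0 hlt hxy).mp hh)
    obtain ⟨e, he⟩ := exists_strict_upper hP {x, y}
    rcases comp x y e hlt (he y (by simp)) with h1 | h1
    · exact absurd h1 hnot
    · exact h1
end

section
/- Let (P, ≤) be a countably infinite partial order with the extension property. Then every countable partial order (Q, ⊑) admits a strong order embedding into P: there exists a map e : Q → P such that for all x, y ∈ Q, e x ≤ e y if and only if x ⊑ y. -/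
open Classical in
/-- Auxiliary recursive construction of the embedding. -/
noncomputable def embAux {P Q : Type*} [PartialOrder P] [Nonempty P] [PartialOrder Q]
    (hP : ExtensionProperty P) (f : Q → ℕ) : Q → P := fun x =>
  if h : ∃ p : P, ∀ y : Q, f y < f x →
      (embAux hP f y ≤ p ↔ y ≤ x) ∧ (p ≤ embAux hP f y ↔ x ≤ y)
  then h.choose else Classical.arbitrary P
termination_by x => f x
decreasing_by all_goals assumption

lemma embAux_spec {P Q : Type*} [PartialOrder P] [Nonempty P] [PartialOrder Q]
    (hP : ExtensionProperty P) (f : Q → ℕ) (hf : Function.Injective f) :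
    ∀ n : ℕ, ∀ x : Q, f x = n → ∀ y : Q, f y < f x →
      (embAux hP f y ≤ embAux hP f x ↔ y ≤ x) ∧
      (embAux hP f x ≤ embAux hP f y ↔ x ≤ y) := by
  classical
  intro n
  induction n using Nat.strong_induction_on with
  | _ n ih =>
  intro x hx
  subst hx
  -- cross property for pairs of smaller elements
  have cross : ∀ y z : Q, f y < f x → f z < f x →
      (embAux hP f y ≤ embAux hP f z ↔ y ≤ z) := by
    intro y z hy hz
    rcases lt_trichotomy (f y) (f z) with h | h | h
    · exact (ih (f z) hz z rfl y h).1
    · have : y = z := hf h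
      subst this
      simp
    · exact (ih (f y) hy y rfl z h).2
  have einj : ∀ y z : Q, f y < f x → f z < f x →
      embAux hP f y = embAux hP f z → y = z := by
    intro y z hy hz h
    exact le_antisymm ((cross y z hy hz).mp h.le) ((cross z y hz hy).mp h.ge)
  -- the finite set of previously handled elements
  have hfin : {y : Q | f y < f x}.Finite :=
    Set.Finite.preimage (Set.injOn_of_injective hf) (Set.finite_Iio (f x))
  let S : Finset Q := hfin.toFinset
  have hmemS : ∀ y : Q, y ∈ S ↔ f y < f x := fun y => hfin.mem_toFinset
  let A : Finset P := S.image (embAux hP f)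
  let R : Option P → Option P → Prop := fun a b =>
    match a, b with
    | some p, some q => p ≤ q
    | some p, none => ∃ y ∈ S, embAux hP f y = p ∧ y ≤ x
    | none, some q => ∃ y ∈ S, embAux hP f y = q ∧ x ≤ y
    | none, none => True
  have memStar : ∀ a ∈ starSet A, a = none ∨ ∃ y ∈ S, a = some (embAux hP f y) := by
    intro a ha
    simp only [starSet, Set.mem_insert_iff, Set.mem_image, Finset.mem_coe] at ha
    rcases ha with h | ⟨p, hp, rfl⟩
    · exact Or.inl h
    · right
      rcases Finset.mem_image.mp hp with ⟨y, hy, rfl⟩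
      exact ⟨y, hy, rfl⟩
  have hrefl : ∀ a ∈ starSet A, R a a := by
    intro a ha
    rcases memStar a ha with rfl | ⟨y, hy, rfl⟩
    · trivial
    · exact le_refl _
  have hanti : ∀ a ∈ starSet A, ∀ b ∈ starSet A, R a b → R b a → a = b := by
    intro a ha b hb hab hba
    rcases memStar a ha with rfl | ⟨y, hy, rfl⟩ <;>
      rcases memStar b hb with rfl | ⟨z, hz, rfl⟩
    · rfl
    · -- none, some
      obtain ⟨u, hu, hue, hxu⟩ := hab
      obtain ⟨v, hv, hve, hvx⟩ := hba
      have huv : u = v := einj u v ((hmemS u).mp hu) ((hmemS v).mp hv) (hue.trans hve.symm)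
      subst huv
      have hxu' : x = u := le_antisymm hxu hvx
      exact absurd ((hmemS u).mp hu) (by rw [← hxu']; exact lt_irrefl _)
    · obtain ⟨u, hu, hue, hux⟩ := hab
      obtain ⟨v, hv, hve, hxv⟩ := hba
      have huv : u = v := einj u v ((hmemS u).mp hu) ((hmemS v).mp hv) (hue.trans hve.symm)
      subst huv
      have hxu' : x = u := le_antisymm hxv hux
      exact absurd ((hmemS u).mp hu) (by rw [← hxu']; exact lt_irrefl _)
    · exact congrArg some (le_antisymm hab hba)
  have htrans : ∀ a ∈ starSet A, ∀ b ∈ starSet A, ∀ c ∈ starSet A,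
      R a b → R b c → R a c := by
    intro a ha b hb c hc hab hbc
    rcases memStar a ha with rfl | ⟨y, hy, rfl⟩ <;>
      rcases memStar b hb with rfl | ⟨z, hz, rfl⟩ <;>
        rcases memStar c hc with rfl | ⟨w, hw, rfl⟩
    · trivial
    · exact hbc
    · trivial
    · -- none, some z, some w
      obtain ⟨u, hu, hue, hxu⟩ := hab
      have huw : u ≤ w := by
        refine (cross u w ((hmemS u).mp hu) ((hmemS w).mp hw)).mp ?_
        rw [hue]; exact hbc
      exact ⟨w, hw, rfl, le_trans hxu huw⟩
    · exact hab
    · -- some y, none, some w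
      obtain ⟨u, hu, hue, hux⟩ := hab
      obtain ⟨v, hv, hve, hxv⟩ := hbc
      have huv : u ≤ v := le_trans hux hxv
      have h2 := (cross u v ((hmemS u).mp hu) ((hmemS v).mp hv)).mpr huv
      show embAux hP f y ≤ embAux hP f w
      rw [← hue, ← hve]; exact h2
    · -- some y, some z, none
      obtain ⟨u, hu, hue, hux⟩ := hbc
      have hyu : y ≤ u := by
        refine (cross y u ((hmemS y).mp hy) ((hmemS u).mp hu)).mp ?_
        rw [hue]; exact hab
      exact ⟨y, hy, rfl, le_trans hyu hux⟩
    · exact le_trans hab hbc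
  have hcompat : ∀ a ∈ A, ∀ b ∈ A, (R (some a) (some b) ↔ a ≤ b) := by
    intro a _ b _; exact Iff.rfl
  obtain ⟨p, hpA, hp⟩ := hP A R hrefl hanti htrans hcompat
  have hex : ∃ p : P, ∀ y : Q, f y < f x →
      (embAux hP f y ≤ p ↔ y ≤ x) ∧ (p ≤ embAux hP f y ↔ x ≤ y) := by
    refine ⟨p, fun y hy => ?_⟩
    have hyS : y ∈ S := (hmemS y).mpr hy
    have hyA : embAux hP f y ∈ A := Finset.mem_image_of_mem _ hyS
    constructor
    · rw [(hp _ hyA).1]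
      constructor
      · rintro ⟨u, hu, hue, hux⟩
        have : u = y := einj u y ((hmemS u).mp hu) hy hue
        exact this ▸ hux
      · intro h; exact ⟨y, hyS, rfl, h⟩
    · rw [(hp _ hyA).2]
      constructor
      · rintro ⟨u, hu, hue, hxu⟩
        have : u = y := einj u y ((hmemS u).mp hu) hy hue
        exact this ▸ hxu
      · intro h; exact ⟨y, hyS, rfl, h⟩
  have hxval : embAux hP f x = hex.choose := by
    conv_lhs => rw [embAux]
    exact dif_pos hex
  have hspec := hex.choose_spec
  rw [← hxval] at hspec
  intro y hy
  exact ⟨(hspec y hy).1, (hspec y hy).2⟩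

/-- Every countable partial order strongly embeds into the random
partial order. -/
theorem countable_poset_embeds_into_random_poset
    (P : Type*) [PartialOrder P] [Countable P] [Infinite P]
    (hP : ExtensionProperty P)
    (Q : Type*) [PartialOrder Q] [Countable Q] :
    ∃ e : Q → P, ∀ x y : Q, e x ≤ e y ↔ x ≤ y := by
  haveI : Nonempty P := inferInstance
  obtain ⟨f, hf⟩ := exists_injective_nat Q
  refine ⟨embAux hP f, fun x y => ?_⟩
  rcases lt_trichotomy (f x) (f y) with h | h | h
  · exact (embAux_spec hP f hf (f y) y rfl x h).1
  · have : x = y := hf h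
    subst this; simp
  · exact (embAux_spec hP f hf (f x) x rfl y h).2
end

section
/- Let (P, ≤) be a countably infinite partial order with the extension property. Then: (i) there exists a map e≤ : P × P → P such that for all x, x', y, y' ∈ P, e≤(x,y) ≤ e≤(x',y') if and only if x ≤ x' and y ≤ y'; and (ii) there exists an injective map e< : P × P → P such that for all x, x', y, y' ∈ P, e<(x,y) < e<(x',y') if and only if x < x' and y < y'. -/
section Aux

variable {P : Type*} [PartialOrder P]

/-- Key one-step extension lemma. -/
lemma keyExt (hP : ExtensionProperty P) {Q : Type*} [PartialOrder Q]
    (S : Finset Q) (f : Q → P)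
    (hf : ∀ a ∈ S, ∀ b ∈ S, (f a ≤ f b ↔ a ≤ b)) (q : Q) (hq : q ∉ S) :
    ∃ p : P, ∀ a ∈ S, (f a ≤ p ↔ a ≤ q) ∧ (p ≤ f a ↔ q ≤ a) := by
  classical
  have finj : ∀ a ∈ S, ∀ b ∈ S, f a = f b → a = b := fun a ha b hb h =>
    le_antisymm ((hf a ha b hb).1 h.le) ((hf b hb a ha).1 h.ge)
  set A : Finset P := S.image f with hA
  set R : Option P → Option P → Prop := fun x y =>
    match x, y with
    | some u, some v => u ≤ v
    | some u, none => ∃ a ∈ S, f a = u ∧ a ≤ q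
    | none, some v => ∃ a ∈ S, f a = v ∧ q ≤ a
    | none, none => True
    with hR
  have decode : ∀ x ∈ starSet A, x = none ∨ ∃ c ∈ S, x = some (f c) := by
    intro x hx
    rcases hx with h | ⟨u, hu, rfl⟩
    · exact Or.inl h
    · right
      rcases Finset.mem_image.1 hu with ⟨c, hc, rfl⟩
      exact ⟨c, hc, rfl⟩
  have hrefl : ∀ x ∈ starSet A, R x x := by
    intro x hx
    rcases decode x hx with rfl | ⟨c, _, rfl⟩
    · trivial
    · exact le_refl _
  have hanti : ∀ x ∈ starSet A, ∀ y ∈ starSet A, R x y → R y x → x = y := by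
    intro x hx y hy hxy hyx
    rcases decode x hx with rfl | ⟨c, hc, rfl⟩ <;> rcases decode y hy with rfl | ⟨d, hd, rfl⟩
    · rfl
    · obtain ⟨a, ha, hfa, hqa⟩ := hxy
      obtain ⟨b, hb, hfb, hbq⟩ := hyx
      have hab : b = a := finj b hb a ha (by rw [hfa, hfb])
      subst hab
      have : b = q := le_antisymm hbq hqa
      rw [this] at hb
      exact absurd hb hq
    · obtain ⟨a, ha, hfa, haq⟩ := hxy
      obtain ⟨b, hb, hfb, hqb⟩ := hyx
      have hab : b = a := finj b hb a ha (by rw [hfa, hfb])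
      subst hab
      have : b = q := le_antisymm haq hqb
      rw [this] at hb
      exact absurd hb hq
    · have : c = d := finj c hc d hd (le_antisymm hxy hyx)
      rw [this]
  have htrans : ∀ x ∈ starSet A, ∀ y ∈ starSet A, ∀ z ∈ starSet A,
      R x y → R y z → R x z := by
    intro x hx y hy z hz hxy hyz
    rcases decode x hx with rfl | ⟨c, hc, rfl⟩ <;> rcases decode y hy with rfl | ⟨d, hd, rfl⟩ <;>
      rcases decode z hz with rfl | ⟨e, he, rfl⟩
    · trivial
    · exact hyz
    · trivial
    · obtain ⟨b, hb, hfb, hqb⟩ := hxy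
      have : b = d := finj b hb d hd hfb
      subst this
      exact ⟨e, he, rfl, hqb.trans ((hf b hb e he).1 hyz)⟩
    · exact hxy
    · obtain ⟨a, ha, hfa, haq⟩ := hxy
      obtain ⟨b, hb, hfb, hqb⟩ := hyz
      have hca : c = a := finj c hc a ha hfa.symm
      have hbe : b = e := finj b hb e he hfb
      subst hca; subst hbe
      exact (hf c hc b hb).2 (haq.trans hqb)
    · obtain ⟨b, hb, hfb, hbq⟩ := hyz
      have : b = d := finj b hb d hd hfb
      subst this
      exact ⟨c, hc, rfl, ((hf c hc b hb).1 hxy).trans hbq⟩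
    · exact hxy.trans hyz
  have hcompat : ∀ a ∈ A, ∀ b ∈ A, (R (some a) (some b) ↔ a ≤ b) := by
    intro a _ b _
    exact Iff.rfl
  obtain ⟨p, hpA, hcond⟩ := hP A R hrefl hanti htrans hcompat
  refine ⟨p, fun a ha => ?_⟩
  have hfa : f a ∈ A := Finset.mem_image_of_mem f ha
  obtain ⟨h1, h2⟩ := hcond (f a) hfa
  constructor
  · rw [h1]
    constructor
    · rintro ⟨b, hb, hfb, hbq⟩
      rwa [finj a ha b hb hfb.symm]
    · exact fun h => ⟨a, ha, rfl, h⟩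
  · rw [h2]
    constructor
    · rintro ⟨b, hb, hfb, hqb⟩
      rwa [finj a ha b hb hfb.symm]
    · exact fun h => ⟨a, ha, rfl, h⟩

/-- General embedding lemma: any countable poset embeds into `P`. -/
lemma mainEmb (hP : ExtensionProperty P) [Countable P] [Infinite P]
    (Q : Type*) [PartialOrder Q] [Countable Q] [Infinite Q] :
    ∃ F : Q → P, ∀ a b : Q, F a ≤ F b ↔ a ≤ b := by
  classical
  haveI : Nonempty P := inferInstance
  obtain ⟨e⟩ : Nonempty (Q ≃ ℕ) := nonempty_equiv_of_countable
  set π : ℕ → Q := ⇑e.symm with hπ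
  have πinj : Function.Injective π := e.symm.injective
  set pred : (ℕ → P) → ℕ → P → Prop := fun g n p =>
    ∀ m < n, (g m ≤ p ↔ π m ≤ π n) ∧ (p ≤ g m ↔ π n ≤ π m) with hpred
  set pick : (ℕ → P) → ℕ → P := fun g n => Classical.epsilon (pred g n) with hpick
  set seq : ℕ → ℕ → P := fun n =>
    Nat.rec (fun _ => Classical.arbitrary P)
      (fun n g m => if m = n then pick g n else g m) n with hseq
  have seq_succ : ∀ n m, seq (n + 1) m = if m = n then pick (seq n) n else seq n m :=
    fun _ _ => rfl
  -- satisfiability of pred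
  have hsat : ∀ (n : ℕ) (g : ℕ → P),
      (∀ m < n, ∀ m' < n, (g m ≤ g m' ↔ π m ≤ π m')) → pred g n (pick g n) := by
    intro n g hg
    apply Classical.epsilon_spec (p := pred g n)
    set S : Finset Q := (Finset.range n).image π with hS
    have hmem : ∀ a ∈ S, ∃ m < n, π m = a := by
      intro a ha
      rcases Finset.mem_image.1 ha with ⟨m, hm, rfl⟩
      exact ⟨m, Finset.mem_range.1 hm, rfl⟩
    have harg1 : ∀ a ∈ S, ∀ b ∈ S, ((fun a => g (e a)) a ≤ (fun a => g (e a)) b ↔ a ≤ b) := by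
      intro a ha b hb
      obtain ⟨m, hm, rfl⟩ := hmem a ha
      obtain ⟨m', hm', rfl⟩ := hmem b hb
      show g (e (π m)) ≤ g (e (π m')) ↔ π m ≤ π m'
      have h1 : e (π m) = m := by rw [hπ, Equiv.apply_symm_apply]
      have h2 : e (π m') = m' := by rw [hπ, Equiv.apply_symm_apply]
      rw [h1, h2]
      exact hg m hm m' hm'
    have harg2 : π n ∉ S := by
      intro hc
      obtain ⟨m, hm, hmn⟩ := hmem (π n) hc
      exact absurd (πinj hmn) (by omega)
    obtain ⟨p, hp⟩ := keyExt hP S (fun a => g (e a)) harg1 (π n) harg2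
    refine ⟨p, fun m hm => ?_⟩
    have hπm : π m ∈ S := Finset.mem_image_of_mem π (Finset.mem_range.2 hm)
    have hge : g (e (π m)) = g m := by rw [hπ, Equiv.apply_symm_apply]
    obtain ⟨h1, h2⟩ := hp (π m) hπm
    rw [hge] at h1 h2
    exact ⟨h1, h2⟩
  -- the invariant
  have Inv : ∀ n, ∀ m < n, ∀ m' < n, (seq n m ≤ seq n m' ↔ π m ≤ π m') := by
    intro n
    induction n with
    | zero => intro m hm; omega
    | succ n IH =>
      intro m hm m' hm'
      rw [seq_succ, seq_succ]
      by_cases h1 : m = n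
      · subst h1
        rw [if_pos rfl]
        by_cases h2 : m' = m
        · subst h2
          rw [if_pos rfl]
          simp
        · rw [if_neg h2]
          exact (hsat m (seq m) IH m' (by omega)).2
      · rw [if_neg h1]
        by_cases h2 : m' = n
        · subst h2
          rw [if_pos rfl]
          exact (hsat m' (seq m') IH m (by omega)).1
        · rw [if_neg h2]
          exact IH m (by omega) m' (by omega)
  -- coherence
  have coh : ∀ n m, m < n → seq n m = seq (m + 1) m := by
    intro n
    induction n with
    | zero => intro m hm; omega
    | succ n IH =>
      intro m hm
      rcases eq_or_lt_of_le (Nat.lt_succ_iff.1 hm) with rfl | h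
      · rfl
      · rw [seq_succ, if_neg (by omega)]
        exact IH m h
  refine ⟨fun a => seq (e a + 1) (e a), fun a b => ?_⟩
  set n : ℕ := max (e a) (e b) + 1 with hn
  have ha : e a < n := by omega
  have hb : e b < n := by omega
  show seq (e a + 1) (e a) ≤ seq (e b + 1) (e b) ↔ a ≤ b
  rw [← coh n (e a) ha, ← coh n (e b) hb]
  have := Inv n (e a) ha (e b) hb
  rwa [hπ, Equiv.symm_apply_apply, Equiv.symm_apply_apply] at this

end Aux

/-- Type synonym for `P × P` with the "diagonal" order. -/
def DiagProd (P : Type*) := P × P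

instance {P : Type*} [PartialOrder P] : PartialOrder (DiagProd P) where
  le a b := a = b ∨ (a.1 < b.1 ∧ a.2 < b.2)
  le_refl a := Or.inl rfl
  le_trans a b c := by
    rintro (rfl | ⟨h1, h2⟩) (rfl | ⟨g1, g2⟩)
    · exact Or.inl rfl
    · exact Or.inr ⟨g1, g2⟩
    · exact Or.inr ⟨h1, h2⟩
    · exact Or.inr ⟨h1.trans g1, h2.trans g2⟩
  le_antisymm a b := by
    rintro (rfl | ⟨h1, h2⟩) h
    · rfl
    · rcases h with rfl | ⟨g1, g2⟩
      · rfl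
      · exact absurd (h1.trans g1) (lt_irrefl _)

instance {P : Type*} [Countable P] : Countable (DiagProd P) :=
  inferInstanceAs (Countable (P × P))

instance {P : Type*} [Countable P] [Infinite P] : Infinite (DiagProd P) :=
  inferInstanceAs (Infinite (P × P))

lemma DiagProd.le_def {P : Type*} [PartialOrder P] (a b : DiagProd P) :
    a ≤ b ↔ a = b ∨ (a.1 < b.1 ∧ a.2 < b.2) := Iff.rfl

/-- The square of the random partial order embeds into it both
as a (non-strict) order embedding `e≤` and as a strict order embedding `e<`. -/
theorem random_poset_square_embeddings
    (P : Type*) [PartialOrder P] [Countable P] [Infinite P]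
    (hP : ExtensionProperty P) :
    (∃ eLe : P × P → P, ∀ x x' y y' : P,
        (eLe (x, y) ≤ eLe (x', y') ↔ x ≤ x' ∧ y ≤ y')) ∧
    (∃ eLt : P × P → P, Function.Injective eLt ∧ ∀ x x' y y' : P,
        (eLt (x, y) < eLt (x', y') ↔ x < x' ∧ y < y')) := by
  constructor
  · obtain ⟨F, hF⟩ := mainEmb hP (P × P)
    refine ⟨F, fun x x' y y' => ?_⟩
    rw [hF, Prod.mk_le_mk]
  · obtain ⟨F, hF⟩ := mainEmb hP (DiagProd P)
    have Finj : Function.Injective F := by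
      intro a b hab
      have h1 : (a : DiagProd P) ≤ b := (hF a b).1 hab.le
      have h2 : (b : DiagProd P) ≤ a := (hF b a).1 hab.ge
      exact le_antisymm h1 h2
    refine ⟨fun p => F (p.1, p.2), ?_, fun x x' y y' => ?_⟩
    · intro a b hab
      have := Finj hab
      have h1 : ((a.1, a.2) : P × P) = (b.1, b.2) := this
      exact Prod.ext (congrArg Prod.fst h1) (congrArg Prod.snd h1)
    · rw [lt_iff_le_and_ne]
      constructor
      · rintro ⟨hle, hne⟩
        rcases (DiagProd.le_def _ _).1 ((hF _ _).1 hle) with h | h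
        · exact absurd (congrArg F h) hne
        · exact h
      · rintro ⟨h1, h2⟩
        refine ⟨(hF _ _).2 (Or.inr ⟨h1, h2⟩), fun hcon => ?_⟩
        have := Finj hcon
        have : x = x' := congrArg Prod.fst this
        exact absurd this h1.ne
end

section
/- Let (P, ≤) be a partial order with the extension property, and let f : P × P → P be a map such that for all x, x', y, y' ∈ P: (x < x' ∧ y < y') implies f(x,y) < f(x',y'), and (x ⊥ x' ∧ y ⊥ y') implies f(x,y) ⊥ f(x',y'). Then f is dominated in the first argument if and only if for all x, x', y, y' ∈ P with x < x' and y ⊥ y' one has f(x,y) < f(x',y'). -/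
/-- `f` is dominated in the first argument. -/
def DominatedFst {P : Type*} [PartialOrder P] (f : P × P → P) : Prop :=
  (∀ x x' y y' : P, x < x' → f (x, y) < f (x', y')) ∧
  (∀ x x' y y' : P, Incomp x x' → Incomp (f (x, y)) (f (x', y')))

/-- `f` is dominated in the second argument. -/
def DominatedSnd {P : Type*} [PartialOrder P] (f : P × P → P) : Prop :=
  (∀ x x' y y' : P, y < y' → f (x, y) < f (x', y')) ∧
  (∀ x x' y y' : P, Incomp y y' → Incomp (f (x, y)) (f (x', y')))

/-- `f` is dominated if it is dominated in the first or second argument. -/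
def Dominated {P : Type*} [PartialOrder P] (f : P × P → P) : Prop :=
  DominatedFst f ∨ DominatedSnd f

lemma exists_between_ext {P : Type*} [PartialOrder P] (hP : ExtensionProperty P)
    {x x' : P} (h : x < x') : ∃ p : P, x < p ∧ p < x' := by
  classical
  let R : Option P → Option P → Prop := fun u v =>
    match u, v with
    | some a, some b => a ≤ b
    | some a, none => a ≤ x
    | none, some b => x' ≤ b
    | none, none => True
  obtain ⟨p, hpA, hp⟩ := hP {x, x'} R
    (by rintro (_|a) _ <;> simp [R])
    (by
      rintro (_|a) _ (_|b) _ h1 h2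
      · rfl
      · exact absurd (h1.trans h2) (not_le_of_gt h)
      · exact absurd (h2.trans h1) (not_le_of_gt h)
      · exact congrArg some (le_antisymm h1 h2))
    (by
      rintro (_|a) _ (_|b) _ (_|c) _ h1 h2
      · trivial
      · exact h2
      · trivial
      · exact h1.trans h2
      · exact h1
      · exact h1.trans (h.le.trans h2)
      · exact h1.trans h2
      · exact h1.trans h2)
    (by intro a _ b _; exact Iff.rfl)
  simp only [Finset.mem_insert, Finset.mem_singleton, not_or] at hpA
  have h1 : x ≤ p := (hp x (by simp)).1.mpr le_rfl
  have h2 : p ≤ x' := (hp x' (by simp)).2.mpr le_rfl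
  exact ⟨p, lt_of_le_of_ne h1 (Ne.symm hpA.1), lt_of_le_of_ne h2 hpA.2⟩

lemma exists_incomp2 {P : Type*} [PartialOrder P] (hP : ExtensionProperty P)
    (y y' : P) : ∃ z : P, Incomp z y ∧ Incomp z y' := by
  classical
  let R : Option P → Option P → Prop := fun u v =>
    match u, v with
    | some a, some b => a ≤ b
    | some _, none => False
    | none, some _ => False
    | none, none => True
  obtain ⟨p, _, hp⟩ := hP {y, y'} R
    (by rintro (_|a) _ <;> simp [R])
    (by
      rintro (_|a) _ (_|b) _ h1 h2
      · rfl
      · exact h1.elim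
      · exact h1.elim
      · exact congrArg some (le_antisymm h1 h2))
    (by
      rintro (_|a) _ (_|b) _ (_|c) _ h1 h2
      · trivial
      · exact h2
      · trivial
      · exact h1
      · exact h1
      · exact h2.elim
      · exact h2
      · exact h1.trans h2)
    (by intro a _ b _; exact Iff.rfl)
  have h1 := hp y (by simp)
  have h2 := hp y' (by simp)
  exact ⟨p, ⟨fun hl => h1.2.mp hl, fun hl => h1.1.mp hl⟩,
    ⟨fun hl => h2.2.mp hl, fun hl => h2.1.mp hl⟩⟩

lemma exists_above_incomp {P : Type*} [PartialOrder P] (hP : ExtensionProperty P)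
    {x x' : P} (h : Incomp x x') : ∃ p : P, x' < p ∧ Incomp p x := by
  classical
  let R : Option P → Option P → Prop := fun u v =>
    match u, v with
    | some a, some b => a ≤ b
    | some a, none => a ≤ x'
    | none, some _ => False
    | none, none => True
  obtain ⟨p, hpA, hp⟩ := hP {x, x'} R
    (by rintro (_|a) _ <;> simp [R])
    (by
      rintro (_|a) _ (_|b) _ h1 h2
      · rfl
      · exact h1.elim
      · exact h2.elim
      · exact congrArg some (le_antisymm h1 h2))
    (by
      rintro (_|a) _ (_|b) _ (_|c) _ h1 h2
      · trivial
      · exact h2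
      · trivial
      · exact h1.elim
      · exact h1
      · exact h2.elim
      · exact h1.trans h2
      · exact h1.trans h2)
    (by intro a _ b _; exact Iff.rfl)
  simp only [Finset.mem_insert, Finset.mem_singleton, not_or] at hpA
  have h1 := hp x (by simp)
  have h2 := hp x' (by simp)
  have hx'p : x' < p := lt_of_le_of_ne (h2.1.mpr le_rfl) (Ne.symm hpA.2)
  exact ⟨p, hx'p, ⟨fun hl => h1.2.mp hl, fun hl => h.1 (h1.1.mp hl)⟩⟩

/-- For a binary map preserving `<` and `⊥` (coordinatewise),
being dominated in the first argument is equivalent to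
`x < x' ∧ y ⊥ y' → f(x,y) < f(x',y')`. -/
theorem dominatedFst_iff
    (P : Type*) [PartialOrder P] (hP : ExtensionProperty P)
    (f : P × P → P)
    (hlt : ∀ x x' y y' : P, x < x' → y < y' → f (x, y) < f (x', y'))
    (hbot : ∀ x x' y y' : P, Incomp x x' → Incomp y y' →
      Incomp (f (x, y)) (f (x', y'))) :
    DominatedFst f ↔
      ∀ x x' y y' : P, x < x' → Incomp y y' → f (x, y) < f (x', y') := by
  constructor
  · intro hd x x' y y' hxx _
    exact hd.1 x x' y y' hxx
  · intro hstar
    have key1 : ∀ x x' y y' : P, x < x' → f (x, y) < f (x', y') := by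
      intro x x' y y' hxx
      obtain ⟨p, hxp, hpx'⟩ := exists_between_ext hP hxx
      obtain ⟨z, hzy, hzy'⟩ := exists_incomp2 hP y y'
      exact lt_trans (hstar x p y z hxp ⟨hzy.2, hzy.1⟩) (hstar p x' z y' hpx' hzy')
    refine ⟨key1, ?_⟩
    intro x x' y y' hxx
    obtain ⟨z, hzy, hzy'⟩ := exists_incomp2 hP y y'
    constructor
    · intro hle
      obtain ⟨p, hx'p, hpx⟩ := exists_above_incomp hP hxx
      have h1 : f (x', y') < f (p, z) := key1 x' p y' z hx'p
      have h2 := hbot x p y z ⟨hpx.2, hpx.1⟩ ⟨hzy.2, hzy.1⟩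
      exact h2.1 (hle.trans h1.le)
    · intro hle
      obtain ⟨p, hxp, hpx'⟩ := exists_above_incomp hP ⟨hxx.2, hxx.1⟩
      have h1 : f (x, y) < f (p, z) := key1 x p y z hxp
      have h2 := hbot x' p y' z ⟨hpx'.2, hpx'.1⟩ ⟨hzy'.2, hzy'.1⟩
      exact h2.1 (hle.trans h1.le)
end
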